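/- arXiv:math/0610305 — 6 statements merged into one kernel-verified Lean document; each statement's English description precedes it below -/
import Mathlib

section
/- Under the rattleback parameter conditions: the quantity θ_d satisfies Im θ_d = 2mΣ₁₂ρ₁ρ₂ > 0 (in particular θ_d ≠ 0); the difference θ₀ − θ₁ = −mρ₃(ρ₁−ρ₂)(Σ₁₁+Σ₂₂−Σ₃₃)/θ_d is not a real number; consequently the characteristic polynomial P(x) = x³ + x² + θ₁x + θ₀ of the residue matrix A has at least one non-real root. -/
open Matrix Complex

open Polynomial in
lemma rattleback_exists_cubic_root (p q : ℂ) : ∃ a : ℂ, a^3 + a^2 + p*a + q = 0 := by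
  have hdeg : (X^3 + X^2 + C p * X + C q : ℂ[X]).degree = 3 := by compute_degree!
  rcases Complex.exists_root (f := X^3 + X^2 + C p * X + C q) (by rw [hdeg]; norm_num) with ⟨a, ha⟩
  exact ⟨a, by simpa [Polynomial.IsRoot] using ha⟩

open Polynomial in
lemma rattleback_exists_quad_root (p q : ℂ) : ∃ b : ℂ, b^2 + p*b + q = 0 := by
  have hdeg : (X^2 + C p * X + C q : ℂ[X]).degree = 2 := by compute_degree!
  rcases Complex.exists_root (f := X^2 + C p * X + C q) (by rw [hdeg]; norm_num) with ⟨b, hb⟩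
  exact ⟨b, by simpa [Polynomial.IsRoot] using hb⟩

lemma rattleback_cubic_nonreal_root (θ1 θ0 : ℂ) (h : (θ0 - θ1).im ≠ 0) :
    ∃ x : ℂ, x ^ 3 + x ^ 2 + θ1 * x + θ0 = 0 ∧ x.im ≠ 0 := by
  obtain ⟨a, ha⟩ := rattleback_exists_cubic_root θ1 θ0
  by_cases haim : a.im ≠ 0
  · exact ⟨a, ha, haim⟩
  push_neg at haim
  set q : ℂ := θ1 + a + a^2 with hq
  have hθ0 : θ0 = -a * q := by rw [hq]; linear_combination ha
  obtain ⟨b, hb⟩ := rattleback_exists_quad_root (1 + a) q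
  set c : ℂ := -(1 + a) - b with hc
  have hsum : a + b + c = -1 := by rw [hc]; ring
  have hbc : b * c = q := by rw [hc]; linear_combination -hb
  have hfact : ∀ x : ℂ, x ^ 3 + x ^ 2 + θ1 * x + θ0 = (x - a) * (x - b) * (x - c) := by
    intro x
    linear_combination (x^2 - a*x) * hsum + (a - x) * hbc + (-x) * hq + hθ0
  have hbroot : b ^ 3 + b ^ 2 + θ1 * b + θ0 = 0 := by rw [hfact b]; ring
  by_cases hbim : b.im ≠ 0
  · exact ⟨b, hbroot, hbim⟩
  push_neg at hbim
  have hcroot : c ^ 3 + c ^ 2 + θ1 * c + θ0 = 0 := by rw [hfact c]; ring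
  by_cases hcim : c.im ≠ 0
  · exact ⟨c, hcroot, hcim⟩
  push_neg at hcim
  exfalso
  apply h
  have key : θ0 - θ1 = (-1 - a) * (-1 - b) * (-1 - c) := by
    linear_combination hfact (-1)
  rw [key]
  simp [Complex.mul_im, Complex.sub_im, Complex.sub_re, haim, hbim, hcim]

/-- Under the rattleback parameter conditions, `Im θ_d = 2mΣ₁₂ρ₁ρ₂ > 0`
(so `θ_d ≠ 0`), the difference `θ₀ − θ₁ = −mρ₃(ρ₁−ρ₂)(Σ₁₁+Σ₂₂−Σ₃₃)/θ_d` is not real,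
and consequently the characteristic polynomial `x³ + x² + θ₁x + θ₀` of the residue
matrix `A` has at least one non-real root. -/
theorem rattleback_charpoly_nonreal_root
    (S11 S12 S22 S33 m g ρ1 ρ2 ρ3 : ℝ)
    (hS11 : 0 < S11) (hS12 : 0 < S12) (hS22 : 0 < S22) (hS33 : 0 < S33)
    (hS : S33 < S11 + S22)
    (hρ12 : ρ2 < ρ1) (hρ2 : 0 < ρ2) (hρ3 : 0 < ρ3)
    (hm : 0 < m) (hg : 0 < g)
    (Ψn Ψd : Matrix (Fin 2) (Fin 2) ℂ)
    (hΨn : Ψn = !![(S11 : ℂ), (S12 : ℂ); (S12 : ℂ), (S22 : ℂ)])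
    (hΨd : Ψd = Ψn - ((S11 + S22 - S33 : ℝ) : ℂ) • (1 : Matrix (Fin 2) (Fin 2) ℂ))
    (v : Fin 2 → ℂ) (hv : v = ![-(ρ1 : ℂ), -(Complex.I * (ρ2 : ℂ))])
    (θd θ1 θ0 : ℂ)
    (hθd : θd = Ψd.det + (m : ℂ) * (v ⬝ᵥ Ψd.mulVec v))
    (hθ1 : θd * θ1 = Ψn.det + (m : ℂ) * (v ⬝ᵥ Ψn.mulVec v
      + (ρ3 : ℂ) * ((S11 : ℂ) * ρ1 - (S22 : ℂ) * ρ2 + Complex.I * S12 * ((ρ1 : ℂ) + ρ2))))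
    (hθ0 : θd * θ0 = θd * θ1 - (m : ℂ) * ρ3 * ((ρ1 : ℂ) - ρ2) * ((S11 : ℂ) + S22 - S33)) :
    θd.im = 2 * m * S12 * ρ1 * ρ2 ∧ 0 < θd.im ∧ θd ≠ 0 ∧
    θ0 - θ1 = -((m : ℂ) * ρ3 * ((ρ1 : ℂ) - ρ2) * ((S11 : ℂ) + S22 - S33)) / θd ∧
    (θ0 - θ1).im ≠ 0 ∧
    ∃ x : ℂ, x ^ 3 + x ^ 2 + θ1 * x + θ0 = 0 ∧ x.im ≠ 0 := by
  have hρ1 : 0 < ρ1 := hρ2.trans hρ12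
  have him : θd.im = 2 * m * S12 * ρ1 * ρ2 := by
    subst hΨn hΨd hv hθd
    simp [Matrix.det_fin_two, Matrix.mulVec, dotProduct, Fin.sum_univ_two,
      Matrix.one_apply, Complex.add_im, Complex.mul_im, Complex.mul_re]
    ring
  have hpos : 0 < θd.im := by rw [him]; positivity
  have hθdne : θd ≠ 0 := by
    intro h
    rw [h] at hpos
    simp at hpos
  -- the real constant
  have hr : 0 < m * ρ3 * (ρ1 - ρ2) * (S11 + S22 - S33) := by
    have h1 : 0 < ρ1 - ρ2 := by linarith
    have h2 : 0 < S11 + S22 - S33 := by linarith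
    positivity
  have hcast : ((m : ℂ) * ρ3 * ((ρ1 : ℂ) - ρ2) * ((S11 : ℂ) + S22 - S33))
      = ((m * ρ3 * (ρ1 - ρ2) * (S11 + S22 - S33) : ℝ) : ℂ) := by push_cast; ring
  have hdiff : θ0 - θ1 = -((m : ℂ) * ρ3 * ((ρ1 : ℂ) - ρ2) * ((S11 : ℂ) + S22 - S33)) / θd := by
    rw [eq_div_iff hθdne]
    linear_combination hθ0
  have hdiffim : (θ0 - θ1).im ≠ 0 := by
    rw [hdiff, hcast]
    set r : ℝ := m * ρ3 * (ρ1 - ρ2) * (S11 + S22 - S33) with hrdef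
    rw [neg_div, Complex.neg_im, Complex.div_im]
    simp only [Complex.ofReal_im, Complex.ofReal_re, zero_mul, zero_div, zero_sub, neg_neg]
    have hnsq : 0 < Complex.normSq θd := by
      rw [Complex.normSq_pos]; exact hθdne
    have : 0 < r * θd.im / Complex.normSq θd := by positivity
    positivity
  exact ⟨him, hpos, hθdne, hdiff, hdiffim, rattleback_cubic_nonreal_root θ1 θ0 hdiffim⟩
end

section
/- Let u ∈ ℂ, u ≠ 0, and let R ∈ ℂ(x₁,x₂,x₃) be a rational function in three variables over ℂ satisfying R(ux₁ + x₂, ux₂, u⁻²x₃) = R(x₁,x₂,x₃). Then R does not depend on x₁, i.e., R lies in the subfield ℂ(x₂,x₃). -/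
open MvPolynomial

noncomputable def Vv (u : ℂ) : Fin 3 → MvPolynomial (Fin 3) ℂ :=
  ![C u * X 0 + X 1, C u * X 1, C (u⁻¹ ^ 2) * X 2]

noncomputable def Wv (u : ℂ) : Fin 3 → MvPolynomial (Fin 3) ℂ :=
  ![C u⁻¹ * X 0 - C (u⁻¹ * u⁻¹) * X 1, C u⁻¹ * X 1, C (u ^ 2) * X 2]

lemma Vv0 (u : ℂ) : Vv u 0 = C u * X 0 + X 1 := rfl
lemma Vv1 (u : ℂ) : Vv u 1 = C u * X 1 := rfl
lemma Vv2 (u : ℂ) : Vv u 2 = C (u⁻¹ ^ 2) * X 2 := rfl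
lemma Wv0 (u : ℂ) : Wv u 0 = C u⁻¹ * X 0 - C (u⁻¹ * u⁻¹) * X 1 := rfl
lemma Wv1 (u : ℂ) : Wv u 1 = C u⁻¹ * X 1 := rfl
lemma Wv2 (u : ℂ) : Wv u 2 = C (u ^ 2) * X 2 := rfl

lemma WV (u : ℂ) (hu : u ≠ 0) (p : MvPolynomial (Fin 3) ℂ) :
    bind₁ (Wv u) (bind₁ (Vv u) p) = p := by
  have h1 : u * u⁻¹ = 1 := mul_inv_cancel₀ hu
  have h2 : u * (u⁻¹ * u⁻¹) = u⁻¹ := by field_simp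
  have h3 : u⁻¹ ^ 2 * u ^ 2 = 1 := by field_simp
  rw [bind₁_bind₁]
  have e0 : bind₁ (Wv u) (Vv u 0) = X 0 := by
    rw [Vv0, map_add, map_mul, bind₁_X_right, bind₁_X_right, bind₁_C_right, Wv0, Wv1,
      mul_sub, ← mul_assoc, ← mul_assoc, ← C_mul, ← C_mul, h1, h2, C_1, one_mul]
    ring
  have e1 : bind₁ (Wv u) (Vv u 1) = X 1 := by
    rw [Vv1, map_mul, bind₁_X_right, bind₁_C_right, Wv1, ← mul_assoc, ← C_mul, h1, C_1, one_mul]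
  have e2 : bind₁ (Wv u) (Vv u 2) = X 2 := by
    rw [Vv2, map_mul, bind₁_X_right, bind₁_C_right, Wv2, ← mul_assoc, ← C_mul, h3, C_1, one_mul]
  have : (fun i => bind₁ (Wv u) (Vv u i)) = (X : Fin 3 → MvPolynomial (Fin 3) ℂ) := by
    funext i
    fin_cases i
    · exact e0
    · exact e1
    · exact e2
  rw [this, bind₁_X_left]
  rfl

lemma VW (u : ℂ) (hu : u ≠ 0) (p : MvPolynomial (Fin 3) ℂ) :
    bind₁ (Vv u) (bind₁ (Wv u) p) = p := by
  have h1 : u⁻¹ * u = 1 := inv_mul_cancel₀ hu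
  have h2 : u⁻¹ * u⁻¹ * u = u⁻¹ := by field_simp
  have h3 : u ^ 2 * u⁻¹ ^ 2 = 1 := by field_simp
  rw [bind₁_bind₁]
  have e0 : bind₁ (Vv u) (Wv u 0) = X 0 := by
    rw [Wv0, map_sub, map_mul, map_mul, bind₁_X_right, bind₁_X_right, bind₁_C_right,
      bind₁_C_right, Vv0, Vv1, mul_add, ← mul_assoc, ← mul_assoc, ← C_mul, ← C_mul, h1, h2,
      C_1, one_mul]
    ring
  have e1 : bind₁ (Vv u) (Wv u 1) = X 1 := by
    rw [Wv1, map_mul, bind₁_X_right, bind₁_C_right, Vv1, ← mul_assoc, ← C_mul, h1, C_1, one_mul]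
  have e2 : bind₁ (Vv u) (Wv u 2) = X 2 := by
    rw [Wv2, map_mul, bind₁_X_right, bind₁_C_right, Vv2, ← mul_assoc, ← C_mul, h3, C_1, one_mul]
  have : (fun i => bind₁ (Vv u) (Wv u i)) = (X : Fin 3 → MvPolynomial (Fin 3) ℂ) := by
    funext i
    fin_cases i
    · exact e0
    · exact e1
    · exact e2
  rw [this, bind₁_X_left]
  rfl

lemma bind₁_Vv_monomial (u : ℂ) (d : Fin 3 →₀ ℕ) (a : ℂ) :
    bind₁ (Vv u) (monomial d a) = ∑ j ∈ Finset.range (d 0 + 1),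
      monomial (Finsupp.single 0 j + Finsupp.single 1 (d 0 - j + d 1) + Finsupp.single 2 (d 2))
        (a * ((d 0).choose j : ℂ) * u ^ (j + d 1) * (u⁻¹ ^ 2) ^ (d 2)) := by
  rw [bind₁_monomial]
  rw [Finset.prod_subset (Finset.subset_univ d.support)
      (fun i _ hi => by rw [Finsupp.notMem_support_iff.mp hi, pow_zero])]
  rw [Fin.prod_univ_three, Vv0, Vv1, Vv2, add_pow, Finset.sum_mul, Finset.sum_mul,
    Finset.mul_sum]
  refine Finset.sum_congr rfl fun j hj => ?_
  have hj' : j ≤ d 0 := Nat.lt_succ_iff.mp (Finset.mem_range.mp hj)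
  rw [mul_pow, mul_pow, mul_pow, ← C_pow, ← C_pow, ← C_pow]
  rw [show ((d 0).choose j : MvPolynomial (Fin 3) ℂ) = C ((d 0).choose j : ℂ) by
    simp [C_eq_coe_nat]]
  simp only [C_apply, monomial_mul, X_pow_eq_monomial]
  rw [show (0 : Fin 3 →₀ ℕ) + (0 + Finsupp.single 0 j + Finsupp.single 1 (d 0 - j) + 0 +
      (0 + Finsupp.single 1 (d 1)) + (0 + Finsupp.single 2 (d 2)))
      = Finsupp.single 0 j + Finsupp.single 1 (d 0 - j + d 1) + Finsupp.single 2 (d 2) by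
    ext i; fin_cases i <;> simp [Finsupp.single_apply]]
  congr 1
  ring

lemma triple_eq_iff (x y z : ℕ) (e : Fin 3 →₀ ℕ) :
    (Finsupp.single 0 x + Finsupp.single 1 y + Finsupp.single 2 z = e) ↔
      (e 0 = x ∧ e 1 = y ∧ e 2 = z) := by
  constructor
  · rintro rfl
    refine ⟨?_, ?_, ?_⟩ <;> simp [Finsupp.single_apply]
  · rintro ⟨h0, h1, h2⟩
    ext i
    fin_cases i <;> simp [Finsupp.single_apply] <;> omega

lemma coeff_bind₁_Vv_monomial (u : ℂ) (d : Fin 3 →₀ ℕ) (a : ℂ) (e : Fin 3 →₀ ℕ) :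
    coeff e (bind₁ (Vv u) (monomial d a)) =
      if e 0 ≤ d 0 ∧ d 0 - e 0 + d 1 = e 1 ∧ d 2 = e 2 then
        a * ((d 0).choose (e 0) : ℂ) * u ^ (e 0 + d 1) * (u⁻¹ ^ 2) ^ (d 2) else 0 := by
  rw [bind₁_Vv_monomial, coeff_sum]
  simp only [coeff_monomial]
  by_cases hle : e 0 ≤ d 0
  · rw [Finset.sum_eq_single_of_mem (e 0) (Finset.mem_range.mpr (Nat.lt_succ_of_le hle))]
    · by_cases h1 : d 0 - e 0 + d 1 = e 1
      · by_cases h2 : d 2 = e 2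
        · rw [if_pos ((triple_eq_iff _ _ _ e).mpr ⟨rfl, h1.symm ▸ rfl, h2.symm ▸ rfl⟩),
            if_pos ⟨hle, h1, h2⟩]
        · rw [if_neg, if_neg]
          · rintro ⟨-, -, h⟩; exact h2 h
          · rw [triple_eq_iff]; rintro ⟨-, -, h⟩; exact h2 h.symm
      · rw [if_neg, if_neg]
        · rintro ⟨-, h, -⟩; exact h1 h
        · rw [triple_eq_iff]; rintro ⟨-, h, -⟩; exact h1 h.symm
    · intro j _ hj
      rw [if_neg]
      rw [triple_eq_iff]
      rintro ⟨h0, -, -⟩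
      exact hj h0.symm
  · rw [if_neg (fun h => hle h.1), Finset.sum_eq_zero]
    intro j hj
    rw [if_neg]
    rw [triple_eq_iff]
    rintro ⟨h0, -, -⟩
    simp only [Finset.mem_range, Nat.lt_succ_iff] at hj
    omega

lemma coeff_bind₁_Vv (u : ℂ) (p : MvPolynomial (Fin 3) ℂ) (e : Fin 3 →₀ ℕ) :
    coeff e (bind₁ (Vv u) p) = ∑ d ∈ p.support,
      (if e 0 ≤ d 0 ∧ d 0 - e 0 + d 1 = e 1 ∧ d 2 = e 2 then
        coeff d p * ((d 0).choose (e 0) : ℂ) * u ^ (e 0 + d 1) * (u⁻¹ ^ 2) ^ (d 2) else 0) := by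
  conv_lhs => rw [← support_sum_monomial_coeff p]
  rw [map_sum, coeff_sum]
  exact Finset.sum_congr rfl fun d _ => coeff_bind₁_Vv_monomial u d (coeff d p) e

lemma ext3 {d e : Fin 3 →₀ ℕ} (h0 : d 0 = e 0) (h1 : d 1 = e 1) (h2 : d 2 = e 2) : d = e := by
  ext i; fin_cases i
  · exact h0
  · exact h1
  · exact h2

lemma core (u : ℂ) (hu : u ≠ 0) (h : MvPolynomial (Fin 3) ℂ) (c : ℂ)
    (hc : bind₁ (Vv u) h = C c * h) : ∀ d ∈ h.support, d 0 = 0 := by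
  by_contra hcon
  push_neg at hcon
  obtain ⟨ds, hds, hd0⟩ := hcon
  have hd0' : 1 ≤ ds 0 := Nat.one_le_iff_ne_zero.mpr hd0
  set B := h.support.filter (fun d => d 0 + d 1 = ds 0 + ds 1 ∧ d 2 = ds 2) with hBdef
  have hBne : B.Nonempty := ⟨ds, Finset.mem_filter.mpr ⟨hds, rfl, rfl⟩⟩
  obtain ⟨dh, hdhB, hmin⟩ := Finset.exists_min_image B (fun d => d 1) hBne
  have hdh_supp : dh ∈ h.support := (Finset.mem_filter.mp hdhB).1
  have hdh_s : dh 0 + dh 1 = ds 0 + ds 1 := (Finset.mem_filter.mp hdhB).2.1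
  have hdh_r : dh 2 = ds 2 := (Finset.mem_filter.mp hdhB).2.2
  have hdh1_le : dh 1 ≤ ds 1 := hmin ds (Finset.mem_filter.mpr ⟨hds, rfl, rfl⟩)
  have hdh0 : 1 ≤ dh 0 := by omega
  have ha : coeff dh h ≠ 0 := mem_support_iff.mp hdh_supp
  have key : ∀ e : Fin 3 →₀ ℕ,
      (∑ d ∈ h.support, if e 0 ≤ d 0 ∧ d 0 - e 0 + d 1 = e 1 ∧ d 2 = e 2 then
        coeff d h * ((d 0).choose (e 0) : ℂ) * u ^ (e 0 + d 1) * (u⁻¹ ^ 2) ^ (d 2) else 0)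
      = c * coeff e h := by
    intro e
    rw [← coeff_bind₁_Vv, hc, coeff_C_mul]
  -- E1
  have e1 := key dh
  rw [Finset.sum_eq_single_of_mem dh hdh_supp] at e1
  swap
  · intro d hd hne
    by_cases hcnd : dh 0 ≤ d 0 ∧ d 0 - dh 0 + d 1 = dh 1 ∧ d 2 = dh 2
    · exfalso
      obtain ⟨hc1, hc2, hc3⟩ := hcnd
      have hdB : d ∈ B := Finset.mem_filter.mpr ⟨hd, by omega, by omega⟩
      have := hmin d hdB
      exact hne (ext3 (by omega) (by omega) (by omega))
    · rw [if_neg hcnd]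
  rw [if_pos ⟨le_rfl, by omega, rfl⟩, Nat.choose_self] at e1
  have hcval : c = u ^ (dh 0 + dh 1) * (u⁻¹ ^ 2) ^ (dh 2) := by
    have h2 := mul_left_cancel₀ ha (show coeff dh h * (u ^ (dh 0 + dh 1) * (u⁻¹ ^ 2) ^ (dh 2))
      = coeff dh h * c by linear_combination e1)
    exact h2.symm
  -- E2
  set e' : Fin 3 →₀ ℕ := Finsupp.single 0 (dh 0 - 1) + Finsupp.single 1 (dh 1 + 1) +
    Finsupp.single 2 (dh 2) with he'def
  have he'0 : e' 0 = dh 0 - 1 := by simp [he'def, Finsupp.single_apply]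
  have he'1 : e' 1 = dh 1 + 1 := by simp [he'def, Finsupp.single_apply]
  have he'2 : e' 2 = dh 2 := by simp [he'def, Finsupp.single_apply]
  have hne' : dh ≠ e' := by
    intro hEq
    have : dh 1 = e' 1 := by rw [hEq]
    omega
  have e2 := key e'
  rw [he'0, he'1, he'2] at e2
  have hdhT : dh ∈ insert e' h.support := Finset.mem_insert_of_mem hdh_supp
  have he'T : e' ∈ (insert e' h.support).erase dh :=
    Finset.mem_erase.mpr ⟨fun hEq => hne' hEq.symm, Finset.mem_insert_self _ _⟩
  rw [Finset.sum_subset (Finset.subset_insert e' h.support)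
      (fun d _ hdnot => by simp [notMem_support_iff.mp hdnot]),
    ← Finset.add_sum_erase _ _ hdhT, ← Finset.add_sum_erase _ _ he'T] at e2
  rw [Finset.sum_eq_zero, add_zero] at e2
  swap
  · intro d hd
    have hdne1 : d ≠ e' := (Finset.mem_erase.mp hd).1
    have hdne2 : d ≠ dh := (Finset.mem_erase.mp (Finset.mem_erase.mp hd).2).1
    have hdmem : d ∈ h.support := by
      rcases Finset.mem_insert.mp (Finset.mem_erase.mp (Finset.mem_erase.mp hd).2).2 with h' | h'
      · exact absurd h' hdne1
      · exact h'
    by_cases hcnd : dh 0 - 1 ≤ d 0 ∧ d 0 - (dh 0 - 1) + d 1 = dh 1 + 1 ∧ d 2 = dh 2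
    · exfalso
      obtain ⟨hc1, hc2, hc3⟩ := hcnd
      have hdB : d ∈ B := Finset.mem_filter.mpr ⟨hdmem, by omega, by omega⟩
      have hge := hmin d hdB
      rcases Nat.lt_or_ge (d 1) (dh 1 + 1) with hlt | hge2
      · exact hdne2 (ext3 (by omega) (by omega) (by omega))
      · exact hdne1 (ext3 (by omega) (by omega) (by omega))
    · rw [if_neg hcnd]
  rw [if_pos ⟨by omega, by omega, rfl⟩, if_pos ⟨by omega, by omega, by omega⟩] at e2
  rw [he'0, he'1, he'2] at e2
  have hch : ((dh 0).choose (dh 0 - 1)) = dh 0 := by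
    rw [Nat.choose_symm hdh0, Nat.choose_one_right]
  have hexp : dh 0 - 1 + (dh 1 + 1) = dh 0 + dh 1 := by omega
  rw [hch, Nat.choose_self, hexp] at e2
  have hzero2 : coeff dh h * (dh 0 : ℂ) * u ^ (dh 0 - 1 + dh 1) * (u⁻¹ ^ 2) ^ dh 2 = 0 := by
    linear_combination e2 + coeff e' h * hcval
  exact (mul_ne_zero (mul_ne_zero (mul_ne_zero ha (Nat.cast_ne_zero.mpr (by omega)))
    (pow_ne_zero _ hu)) (pow_ne_zero _ (pow_ne_zero _ (inv_ne_zero hu)))) hzero2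

lemma isUnit_eq_C : ∀ {n : ℕ} (p : MvPolynomial (Fin n) ℂ), IsUnit p → ∃ c : ℂ, p = C c := by
  intro n
  induction n with
  | zero =>
    intro p _
    exact ⟨p.coeff 0, eq_C_of_isEmpty p⟩
  | succ n ih =>
    intro p hp
    have h1 : IsUnit (finSuccEquiv ℂ n p) := hp.map _
    obtain ⟨r, hr, hCr⟩ := Polynomial.isUnit_iff.mp h1
    obtain ⟨c, rfl⟩ := ih r hr
    refine ⟨c, (finSuccEquiv ℂ n).injective ?_⟩
    rw [← hCr]
    rw [finSuccEquiv_apply, eval₂Hom_C]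
    rfl

lemma supported_of (p : MvPolynomial (Fin 3) ℂ) (hp : ∀ d ∈ p.support, d 0 = 0) :
    p ∈ MvPolynomial.supported ℂ ({1, 2} : Set (Fin 3)) := by
  rw [mem_supported]
  intro i hi
  rw [Finset.mem_coe, mem_vars] at hi
  obtain ⟨d, hd, hid⟩ := hi
  have hne : d i ≠ 0 := Finsupp.mem_support_iff.mp hid
  fin_cases i
  · exact absurd (hp d hd) hne
  · exact Set.mem_insert _ _
  · exact Set.mem_insert_of_mem _ rfl

/-- If a rational function `R = f/g` in three variables is invariant under
the substitution `(x₁,x₂,x₃) ↦ (ux₁ + x₂, ux₂, u⁻²x₃)` (`u ≠ 0`), then `R` does not depend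
on `x₁`: it can be written as a quotient `f'/g'` of polynomials in `x₂, x₃` only. -/
theorem invariant_rational_function_independent_of_first_variable
    (u : ℂ) (hu : u ≠ 0)
    (f g : MvPolynomial (Fin 3) ℂ) (hg : g ≠ 0)
    (hinv : bind₁ ![C u * X 0 + X 1, C u * X 1, C (u⁻¹ ^ 2) * X 2] f * g
      = f * bind₁ ![C u * X 0 + X 1, C u * X 1, C (u⁻¹ ^ 2) * X 2] g) :
    ∃ f' g' : MvPolynomial (Fin 3) ℂ, g' ≠ 0 ∧
      f' ∈ MvPolynomial.supported ℂ ({1, 2} : Set (Fin 3)) ∧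
      g' ∈ MvPolynomial.supported ℂ ({1, 2} : Set (Fin 3)) ∧
      f * g' = f' * g := by
  have hinv' : bind₁ (Vv u) f * g = f * bind₁ (Vv u) g := hinv
  by_cases hf : f = 0
  · exact ⟨0, 1, one_ne_zero, Subalgebra.zero_mem _, Subalgebra.one_mem _, by simp [hf]⟩
  obtain ⟨f₀, g₀, d, hcop, hdf, hdg⟩ := UniqueFactorizationMonoid.exists_reduced_factors f hf g
  have hdne : d ≠ 0 := by
    rintro rfl
    rw [zero_mul] at hdf
    exact hf hdf.symm
  have hf₀ : f₀ ≠ 0 := by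
    rintro rfl
    rw [mul_zero] at hdf
    exact hf hdf.symm
  have hg₀ : g₀ ≠ 0 := by
    rintro rfl
    rw [mul_zero] at hdg
    exact hg hdg.symm
  have hinj : Function.Injective (bind₁ (Vv u) : MvPolynomial (Fin 3) ℂ →ₐ[ℂ] _) :=
    Function.LeftInverse.injective (WV u hu)
  have hσd : bind₁ (Vv u) d ≠ 0 := fun h0 => hdne (hinj (by rw [h0, map_zero]))
  rw [← hdf, ← hdg, map_mul, map_mul] at hinv'
  have hkey : bind₁ (Vv u) f₀ * g₀ = f₀ * bind₁ (Vv u) g₀ :=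
    mul_left_cancel₀ (mul_ne_zero hσd hdne) (by linear_combination hinv')
  have hdvd1 : f₀ ∣ bind₁ (Vv u) f₀ :=
    hcop.dvd_of_dvd_mul_right ⟨bind₁ (Vv u) g₀, hkey⟩
  obtain ⟨w, hw⟩ := hdvd1
  have hkey2 : f₀ * bind₁ (Wv u) g₀ = bind₁ (Wv u) f₀ * g₀ := by
    have := congrArg (bind₁ (Wv u)) hkey
    rw [map_mul, map_mul, WV u hu, WV u hu] at this
    exact this
  have hdvd2 : f₀ ∣ bind₁ (Wv u) f₀ :=
    hcop.dvd_of_dvd_mul_right ⟨bind₁ (Wv u) g₀, hkey2.symm⟩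
  obtain ⟨v, hv⟩ := hdvd2
  have hunit : IsUnit w := by
    have h1 : f₀ * 1 = f₀ * (v * bind₁ (Wv u) w) := by
      have := congrArg (bind₁ (Wv u)) hw
      rw [map_mul, WV u hu] at this
      rw [hv] at this
      rw [mul_one]
      linear_combination this
    have h2 : (1 : MvPolynomial (Fin 3) ℂ) = v * bind₁ (Wv u) w := mul_left_cancel₀ hf₀ h1
    have h3 : IsUnit (bind₁ (Wv u) w) := IsUnit.of_mul_eq_one v (by linear_combination h2.symm)
    have h4 := h3.map (bind₁ (Vv u))
    rwa [VW u hu] at h4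
  obtain ⟨cw, rfl⟩ := isUnit_eq_C w hunit
  have hσf₀ : bind₁ (Vv u) f₀ = C cw * f₀ := by rw [hw]; ring
  have hσg₀ : bind₁ (Vv u) g₀ = C cw * g₀ := by
    apply mul_left_cancel₀ hf₀
    rw [← hkey, hσf₀]
    ring
  refine ⟨f₀, g₀, hg₀, supported_of f₀ (core u hu f₀ cw hσf₀),
    supported_of g₀ (core u hu g₀ cw hσg₀), ?_⟩
  rw [← hdf, ← hdg]
  ring
end

section
/- Let u ∈ ℂ* be not a root of unity. Let f, g ∈ ℂ[x₁,x₂,x₃] be homogeneous polynomials with g ≠ 0 such that the rational function R = f/g is invariant under the substitution (x₁,x₂,x₃) ↦ (ux₁ + x₂, ux₂, u⁻²x₃), i.e., f(ux₁+x₂, ux₂, u⁻²x₃)·g(x₁,x₂,x₃) = f(x₁,x₂,x₃)·g(ux₁+x₂, ux₂, u⁻²x₃). Then there exist c ∈ ℂ and m ∈ ℤ such that R = c·(x₂²x₃)^m in ℂ(x₁,x₂,x₃); in particular deg f − deg g = 3m. Thus every homogeneous rational invariant of M₊ is a constant multiple of a power of the invariant x₂²x₃. -/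
open MvPolynomial Finset

noncomputable section Stmt7Aux

abbrev MP3 := MvPolynomial (Fin 3) ℂ

def efin (a b c : ℕ) : Fin 3 →₀ ℕ :=
  Finsupp.single 0 a + Finsupp.single 1 b + Finsupp.single 2 c

@[simp] lemma efin_apply0 (a b c : ℕ) : efin a b c 0 = a := by
  simp [efin, Finsupp.single_apply]
@[simp] lemma efin_apply1 (a b c : ℕ) : efin a b c 1 = b := by
  simp [efin, Finsupp.single_apply]
@[simp] lemma efin_apply2 (a b c : ℕ) : efin a b c 2 = c := by
  simp [efin, Finsupp.single_apply]

lemma finsupp3_ext {μ ν : Fin 3 →₀ ℕ} (h0 : μ 0 = ν 0) (h1 : μ 1 = ν 1)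
    (h2 : μ 2 = ν 2) : μ = ν := by
  ext i; fin_cases i
  · exact h0
  · exact h1
  · exact h2

lemma deg_eq_w1 : (Finsupp.degree : (Fin 3 →₀ ℕ) →+ ℕ) = Finsupp.weight 1 :=
  Finsupp.degree_eq_weight_one

lemma degree3 (d : Fin 3 →₀ ℕ) : d.degree = d 0 + d 1 + d 2 := by
  rw [Finsupp.degree_apply, Finset.sum_subset (Finset.subset_univ _)
    (fun i _ hi => by simpa using Finsupp.notMem_support_iff.mp hi)]
  exact Fin.sum_univ_three d

lemma mono_efin (a b c : ℕ) (r : ℂ) :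
    (monomial (efin a b c) r : MP3) = C r * X 0 ^ a * X 1 ^ b * X 2 ^ c := by
  rw [X_pow_eq_monomial, X_pow_eq_monomial, X_pow_eq_monomial, C_apply,
    monomial_mul, monomial_mul, monomial_mul]
  simp [efin]

lemma mono_expand (μ : Fin 3 →₀ ℕ) (r : ℂ) :
    (monomial μ r : MP3) = C r * X 0 ^ (μ 0) * X 1 ^ (μ 1) * X 2 ^ (μ 2) := by
  conv_lhs => rw [show μ = efin (μ 0) (μ 1) (μ 2) from
    finsupp3_ext (by simp) (by simp) (by simp)]
  exact mono_efin _ _ _ _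

/-! ### factors of homogeneous polynomials are homogeneous -/

lemma exists_deg_extreme (a b : MP3) (ka kb : ℕ) (flip : Bool)
    (hA : ∀ μ ∈ a.support, if flip then μ.degree ≤ ka else ka ≤ μ.degree)
    (hB : ∀ μ ∈ b.support, if flip then μ.degree ≤ kb else kb ≤ μ.degree)
    (hA' : homogeneousComponent ka a ≠ 0) (hB' : homogeneousComponent kb b ≠ 0) :
    ∃ μ ∈ (a * b).support, μ.degree = ka + kb := by
  have hne : homogeneousComponent ka a * homogeneousComponent kb b ≠ 0 := mul_ne_zero hA' hB'
  obtain ⟨μ, hμ⟩ := MvPolynomial.ne_zero_iff.mp hne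
  have hdeg : μ.degree = ka + kb := by
    have := ((homogeneousComponent_isHomogeneous ka a).mul
      (homogeneousComponent_isHomogeneous kb b)) hμ
    rw [← this, ← deg_eq_w1]
  refine ⟨μ, ?_, hdeg⟩
  rw [mem_support_iff, coeff_mul]
  have key : ∀ x ∈ Finset.HasAntidiagonal.antidiagonal μ,
      coeff x.1 a * coeff x.2 b
        = coeff x.1 (homogeneousComponent ka a) * coeff x.2 (homogeneousComponent kb b) := by
    intro x hx
    rw [Finset.HasAntidiagonal.mem_antidiagonal] at hx
    have hsum : x.1.degree + x.2.degree = ka + kb := by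
      have h' : (x.1 + x.2).degree = ka + kb := hx ▸ hdeg
      rw [degree3] at h'
      rw [degree3, degree3]
      simp only [Finsupp.add_apply] at h'
      omega
    by_cases h1 : coeff x.1 a = 0
    · rw [h1, coeff_homogeneousComponent ka a, h1]; simp
    by_cases h2 : coeff x.2 b = 0
    · rw [h2, coeff_homogeneousComponent kb b, h2]; simp
    have e1 : x.1.degree = ka := by
      have hA' := hA x.1 (mem_support_iff.mpr h1)
      have hB' := hB x.2 (mem_support_iff.mpr h2)
      cases flip <;> simp at hA' hB' <;> omega
    have e2 : x.2.degree = kb := by omega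
    rw [coeff_homogeneousComponent, coeff_homogeneousComponent, if_pos e1, if_pos e2]
  rw [Finset.sum_congr rfl key, ← coeff_mul]
  exact hμ

lemma isHomogeneous_of_mul {a b : MP3} {n : ℕ} (ha : a ≠ 0) (hb : b ≠ 0)
    (h : (a * b).IsHomogeneous n) :
    ∃ p q, p + q = n ∧ a.IsHomogeneous p ∧ b.IsHomogeneous q := by
  obtain ⟨μa, hμa, hmina⟩ := a.support.exists_min_image Finsupp.degree
    (support_nonempty.mpr ha)
  obtain ⟨μb, hμb, hminb⟩ := b.support.exists_min_image Finsupp.degree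
    (support_nonempty.mpr hb)
  obtain ⟨νa, hνa, hmaxa⟩ := a.support.exists_max_image Finsupp.degree
    (support_nonempty.mpr ha)
  obtain ⟨νb, hνb, hmaxb⟩ := b.support.exists_max_image Finsupp.degree
    (support_nonempty.mpr hb)
  have hca : ∀ μ ∈ a.support, homogeneousComponent μ.degree a ≠ 0 := by
    intro μ hμ
    rw [MvPolynomial.ne_zero_iff]
    exact ⟨μ, by rw [coeff_homogeneousComponent, if_pos rfl]; exact mem_support_iff.mp hμ⟩
  have hcb : ∀ μ ∈ b.support, homogeneousComponent μ.degree b ≠ 0 := by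
    intro μ hμ
    rw [MvPolynomial.ne_zero_iff]
    exact ⟨μ, by rw [coeff_homogeneousComponent, if_pos rfl]; exact mem_support_iff.mp hμ⟩
  obtain ⟨μ₁, hμ₁, hd₁⟩ := exists_deg_extreme a b _ _ false
    (by simpa using fun μ hμ => hmina μ hμ) (by simpa using fun μ hμ => hminb μ hμ)
    (hca μa hμa) (hcb μb hμb)
  obtain ⟨μ₂, hμ₂, hd₂⟩ := exists_deg_extreme a b _ _ true
    (by simpa using fun μ hμ => hmaxa μ hμ) (by simpa using fun μ hμ => hmaxb μ hμ)
    (hca νa hνa) (hcb νb hνb)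
  have h₁ : μa.degree + μb.degree = n := by
    rw [← hd₁, Finsupp.degree_eq_weight_one]; exact h (mem_support_iff.mp hμ₁)
  have h₂ : νa.degree + νb.degree = n := by
    rw [← hd₂, Finsupp.degree_eq_weight_one]; exact h (mem_support_iff.mp hμ₂)
  have hle_a : μa.degree ≤ νa.degree := hmaxa μa hμa
  have hle_b : μb.degree ≤ νb.degree := hmaxb μb hμb
  refine ⟨μa.degree, μb.degree, h₁, ?_, ?_⟩
  · intro d hd
    rw [← deg_eq_w1]
    have := hmina d (mem_support_iff.mpr hd)
    have := hmaxa d (mem_support_iff.mpr hd)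
    omega
  · intro d hd
    rw [← deg_eq_w1]
    have := hminb d (mem_support_iff.mpr hd)
    have := hmaxb d (mem_support_iff.mpr hd)
    omega

lemma eq_C_of_hom0 (q : MP3) (h : q.IsHomogeneous 0) : q = C (coeff 0 q) := by
  by_cases hq : q = 0
  · simp [hq]
  have hs : q.support ⊆ {(0 : Fin 3 →₀ ℕ)} := by
    intro d hd
    have hdd := h (mem_support_iff.mp hd)
    rw [← deg_eq_w1] at hdd
    have := (Finsupp.degree_eq_zero_iff d).mp hdd
    simp [this]
  conv_lhs => rw [q.as_sum]
  rw [Finset.sum_subset hs (fun d _ hd => by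
    rw [notMem_support_iff.mp hd, monomial_zero]), Finset.sum_singleton, ← C_apply]

/-! ### the substitution and its coefficients -/

def vv (u : ℂ) : Fin 3 → MP3 := ![C u * X 0 + X 1, C u * X 1, C (u⁻¹ ^ 2) * X 2]

def ww (u : ℂ) : Fin 3 → MP3 :=
  ![C u⁻¹ * X 0 - C (u⁻¹ * u⁻¹) * X 1, C u⁻¹ * X 1, C (u ^ 2) * X 2]

lemma bind_left_inverse (u : ℂ) (hu0 : u ≠ 0) (p : MP3) :
    bind₁ (ww u) (bind₁ (vv u) p) = p := by
  rw [bind₁_bind₁]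
  have h1 : (C u : MP3) * C u⁻¹ = 1 := by rw [← C_mul, mul_inv_cancel₀ hu0, C_1]
  have h2 : (C (u⁻¹ ^ 2) : MP3) * C (u ^ 2) = 1 := by
    rw [← C_mul, inv_pow, inv_mul_cancel₀ (pow_ne_zero _ hu0), C_1]
  have e0 : bind₁ (ww u) (vv u 0) = X 0 := by
    simp only [vv, ww, Matrix.cons_val_zero, Matrix.cons_val_one, Matrix.head_cons,
      map_add, map_mul, map_sub, algHom_C, bind₁_X_right, C_mul, algebraMap_eq]
    linear_combination (X 0 - C u⁻¹ * X 1 : MP3) * h1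
  have e1 : bind₁ (ww u) (vv u 1) = X 1 := by
    simp only [vv, ww, Matrix.cons_val_zero, Matrix.cons_val_one, Matrix.head_cons,
      map_add, map_mul, map_sub, algHom_C, bind₁_X_right, C_mul, algebraMap_eq]
    linear_combination (X 1 : MP3) * h1
  have e2 : bind₁ (ww u) (vv u 2) = X 2 := by
    simp only [vv, ww, Matrix.cons_val_zero, Matrix.cons_val_one, Matrix.head_cons,
      Matrix.cons_val_two, Matrix.tail_cons, map_add, map_mul, map_sub, algHom_C,
      bind₁_X_right, C_mul, algebraMap_eq]
    linear_combination (X 2 : MP3) * h2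
  have hfun : (fun i => bind₁ (ww u) (vv u i)) = (X : Fin 3 → MP3) := by
    funext i
    fin_cases i
    · exact e0
    · exact e1
    · exact e2
  rw [hfun, bind₁_X_left]
  rfl

lemma bind_vv_ne_zero (u : ℂ) (hu0 : u ≠ 0) {p : MP3} (hp : p ≠ 0) :
    bind₁ (vv u) p ≠ 0 := fun h =>
  hp (by rw [← bind_left_inverse u hu0 p, h, map_zero])

lemma vv_isHomogeneous (u : ℂ) : ∀ i, ((vv u) i).IsHomogeneous 1 := by
  intro i
  fin_cases i
  · exact (isHomogeneous_C_mul_X u 0).add (isHomogeneous_X _ 1)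
  · exact isHomogeneous_C_mul_X u 1
  · exact isHomogeneous_C_mul_X (u⁻¹ ^ 2) 2

lemma bind_vv_isHomogeneous (u : ℂ) {p : MP3} {d : ℕ} (hp : p.IsHomogeneous d) :
    (bind₁ (vv u) p).IsHomogeneous d := by
  simpa using hp.aeval (vv u) (vv_isHomogeneous u)

lemma bind_monomial (u : ℂ) (μ : Fin 3 →₀ ℕ) (r : ℂ) :
    bind₁ (vv u) (monomial μ r) =
      ∑ t ∈ Finset.range (μ 0 + 1),
        monomial (efin t (μ 0 - t + μ 1) (μ 2))
          (r * ((μ 0).choose t : ℂ) * u ^ (t + μ 1) * (u⁻¹ ^ 2) ^ (μ 2)) := by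
  rw [mono_expand]
  simp only [map_mul, map_pow, algHom_C, bind₁_X_right, vv]
  simp only [Matrix.cons_val_zero, Matrix.cons_val_one, Matrix.head_cons,
    Matrix.cons_val_two, Matrix.tail_cons]
  rw [add_pow]
  rw [Finset.mul_sum, Finset.sum_mul, Finset.sum_mul]
  refine Finset.sum_congr rfl fun t ht => ?_
  rw [Finset.mem_range] at ht
  have ht' : t ≤ μ 0 := by omega
  rw [mono_efin, pow_add]
  rw [mul_pow, mul_pow, mul_pow, ← C_pow, ← C_pow, ← C_pow]
  rw [map_mul, map_mul, map_mul, map_mul, ← C_pow, map_natCast]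
  simp only [algebraMap_eq]
  ring

def Fco (u : ℂ) (p : MP3) (ν μ : Fin 3 →₀ ℕ) : ℂ :=
  if ν 0 ≤ μ 0 ∧ μ 0 + μ 1 = ν 0 + ν 1 ∧ μ 2 = ν 2 then
    coeff μ p * ((μ 0).choose (ν 0) : ℂ) * u ^ (ν 0 + μ 1) * (u⁻¹ ^ 2) ^ (μ 2)
  else 0

lemma coeff_bind (u : ℂ) (p : MP3) (ν : Fin 3 →₀ ℕ) :
    coeff ν (bind₁ (vv u) p) = ∑ μ ∈ p.support, Fco u p ν μ := by
  conv_lhs => rw [p.as_sum, map_sum]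
  rw [MvPolynomial.coeff_sum]
  refine Finset.sum_congr rfl fun μ hμ => ?_
  rw [bind_monomial, MvPolynomial.coeff_sum]
  simp only [coeff_monomial]
  unfold Fco
  by_cases hc : ν 0 ≤ μ 0 ∧ μ 0 + μ 1 = ν 0 + ν 1 ∧ μ 2 = ν 2
  · rw [if_pos hc]
    obtain ⟨hc1, hc2, hc3⟩ := hc
    rw [Finset.sum_eq_single (ν 0)]
    · rw [if_pos (finsupp3_ext (by simp) (by simp; omega) (by simpa using hc3))]
    · intro t ht hne
      rw [if_neg]
      intro h
      exact hne (by simpa using (congrArg (fun m => m 0) h))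
    · intro h
      exact absurd (Finset.mem_range.mpr (by omega)) h
  · rw [if_neg hc]
    refine Finset.sum_eq_zero fun t ht => ?_
    rw [Finset.mem_range] at ht
    rw [if_neg]
    intro h
    have h0 := congrArg (fun m => m 0) h
    have h1 := congrArg (fun m => m 1) h
    have h2 := congrArg (fun m => m 2) h
    simp at h0 h1 h2
    exact hc ⟨by omega, by omega, h2⟩

lemma upow_inj {u : ℂ} (hu0 : u ≠ 0) (hu : ∀ n : ℕ, 0 < n → u ^ n ≠ 1)
    {a b : ℕ} (h : u ^ a = u ^ b) : a = b := by
  rcases Nat.lt_trichotomy a b with hab | hab | hab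
  · exfalso
    apply hu (b - a) (by omega)
    have : u ^ a * u ^ (b - a) = u ^ a * 1 := by
      rw [← pow_add, mul_one]; rw [h]; congr 1; omega
    exact mul_left_cancel₀ (pow_ne_zero _ hu0) this
  · exact hab
  · exfalso
    apply hu (a - b) (by omega)
    have : u ^ b * u ^ (a - b) = u ^ b * 1 := by
      rw [← pow_add, mul_one]; rw [← h]; congr 1; omega
    exact mul_left_cancel₀ (pow_ne_zero _ hu0) this

lemma winv {u : ℂ} (hu0 : u ≠ 0) (k : ℕ) : (u⁻¹ ^ 2) ^ k * u ^ (2 * k) = 1 := by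
  rw [← pow_mul, ← mul_pow, inv_mul_cancel₀ hu0, one_pow]

/-! ### classification of homogeneous semi-invariants -/

lemma classify {u : ℂ} (hu0 : u ≠ 0) (hu : ∀ n : ℕ, 0 < n → u ^ n ≠ 1)
    (d : ℕ) (p : MP3) (hp : p ≠ 0) (hom : p.IsHomogeneous d) (lam : ℂ)
    (heig : bind₁ (vv u) p = C lam * p) :
    ∃ (j k : ℕ) (c : ℂ), c ≠ 0 ∧ j + k = d ∧ p = monomial (efin 0 j k) c ∧
      lam * u ^ (2 * k) = u ^ j := by
  have hcoeff : ∀ ν, (∑ μ ∈ p.support, Fco u p ν μ) = lam * coeff ν p := by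
    intro ν
    rw [← coeff_bind, heig, coeff_C_mul]
  obtain ⟨ν', hν'mem, hmax⟩ := p.support.exists_max_image (fun μ => μ 0)
    (support_nonempty.mpr hp)
  have hcν' : coeff ν' p ≠ 0 := mem_support_iff.mp hν'mem
  have hdeg : ∀ ν ∈ p.support, ν 0 + ν 1 + ν 2 = d := by
    intro ν hν
    have := hom (mem_support_iff.mp hν)
    rw [← deg_eq_w1] at this
    rw [degree3] at this
    exact this
  have step1 : lam = u ^ (ν' 0 + ν' 1) * (u⁻¹ ^ 2) ^ (ν' 2) := by
    have h := hcoeff ν'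
    rw [Finset.sum_eq_single ν'] at h
    · rw [Fco, if_pos ⟨le_refl _, rfl, rfl⟩, Nat.choose_self] at h
      have h' : (u ^ (ν' 0 + ν' 1) * (u⁻¹ ^ 2) ^ (ν' 2)) * coeff ν' p
          = lam * coeff ν' p := by
        rw [← h]; push_cast; ring
      exact (mul_right_cancel₀ hcν' h').symm
    · intro μ hμ hne
      rw [Fco, if_neg]
      rintro ⟨h1, h2, h3⟩
      have := hmax μ hμ
      exact hne (finsupp3_ext (by omega) (by omega) h3)
    · intro h; exact absurd hν'mem h
  have step2 : ν' 0 = 0 := by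
    by_contra h0
    have h1 : 1 ≤ ν' 0 := by omega
    set νb := efin (ν' 0 - 1) (ν' 1 + 1) (ν' 2) with hνb
    have hb0 : νb 0 = ν' 0 - 1 := by rw [hνb]; simp
    have hb1 : νb 1 = ν' 1 + 1 := by rw [hνb]; simp
    have hb2 : νb 2 = ν' 2 := by rw [hνb]; simp
    have hne : νb ≠ ν' := fun h => by
      have := congrArg (fun m => m 0) h
      simp only [hb0] at this; omega
    have key : ∑ μ ∈ p.support, Fco u p νb μ = Fco u p νb νb + Fco u p νb ν' := by
      have hzero : ∀ μ ∈ p.support, μ ∉ ({νb, ν'} : Finset _) → Fco u p νb μ = 0 := by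
        intro μ hμ hμT
        rw [Fco, if_neg]
        rintro ⟨h1', h2', h3'⟩
        simp only [Finset.mem_insert, Finset.mem_singleton] at hμT
        push_neg at hμT
        have hmax' := hmax μ hμ
        rw [hb0] at h1'
        rw [hb0, hb1] at h2'
        rw [hb2] at h3'
        rcases Nat.eq_or_lt_of_le hmax' with he | hlt
        · exact hμT.2 (finsupp3_ext he (by omega) h3')
        · have : μ 0 = ν' 0 - 1 := by omega
          exact hμT.1 (finsupp3_ext (by omega) (by omega) (h3'.trans hb2.symm))
      have e1 : ∑ μ ∈ p.support, Fco u p νb μ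
          = ∑ μ ∈ p.support ∪ {νb, ν'}, Fco u p νb μ := by
        refine Finset.sum_subset Finset.subset_union_left fun μ _ hμ => ?_
        rw [Fco]
        have : coeff μ p = 0 := notMem_support_iff.mp hμ
        rw [this]
        simp
      have e2 : ∑ μ ∈ ({νb, ν'} : Finset _), Fco u p νb μ
          = ∑ μ ∈ p.support ∪ {νb, ν'}, Fco u p νb μ := by
        refine Finset.sum_subset Finset.subset_union_right fun μ hμu hμT => ?_
        exact hzero μ (Finset.mem_union.mp hμu |>.resolve_right hμT) hμT
      rw [e1, ← e2, Finset.sum_insert (by simpa using hne), Finset.sum_singleton]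
    have h := hcoeff νb
    rw [key] at h
    have hFbb : Fco u p νb νb = lam * coeff νb p := by
      rw [Fco, if_pos ⟨le_refl _, rfl, rfl⟩, Nat.choose_self, step1]
      rw [hb0, hb1, hb2]
      have : ν' 0 - 1 + (ν' 1 + 1) = ν' 0 + ν' 1 := by omega
      rw [this]; push_cast; ring
    have hch : ((ν' 0).choose (ν' 0 - 1) : ℂ) = (ν' 0 : ℂ) := by
      have : (ν' 0).choose (ν' 0 - 1) = ν' 0 := by
        rw [Nat.choose_symm h1, Nat.choose_one_right]
      exact_mod_cast congrArg (Nat.cast : ℕ → ℂ) this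
    have hFbν : Fco u p νb ν' =
        coeff ν' p * (ν' 0 : ℂ) * u ^ (ν' 0 - 1 + ν' 1) * (u⁻¹ ^ 2) ^ (ν' 2) := by
      rw [Fco, if_pos ⟨by omega, by omega, hb2.symm⟩, hb0, hch]
    rw [hFbb, hFbν] at h
    have : coeff ν' p * (ν' 0 : ℂ) * u ^ (ν' 0 - 1 + ν' 1) * (u⁻¹ ^ 2) ^ (ν' 2) = 0 := by
      linear_combination h
    rcases mul_eq_zero.mp this with h' | h'
    · rcases mul_eq_zero.mp h' with h'' | h''
      · rcases mul_eq_zero.mp h'' with h3 | h3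
        · exact hcν' h3
        · have : (ν' 0 : ℂ) ≠ 0 := Nat.cast_ne_zero.mpr (by omega)
          exact this h3
      · exact pow_ne_zero _ hu0 h''
    · exact pow_ne_zero _ (pow_ne_zero _ (inv_ne_zero hu0)) h'
  have hzero0 : ∀ ν ∈ p.support, ν 0 = 0 := fun ν hν => by
    have := hmax ν hν; omega
  have heigν : ∀ ν ∈ p.support, lam = u ^ (ν 1) * (u⁻¹ ^ 2) ^ (ν 2) := by
    intro ν hν
    have h := hcoeff ν
    rw [Finset.sum_eq_single ν] at h
    · rw [Fco, if_pos ⟨le_refl _, rfl, rfl⟩, Nat.choose_self] at h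
      have h' : (u ^ (ν 0 + ν 1) * (u⁻¹ ^ 2) ^ (ν 2)) * coeff ν p = lam * coeff ν p := by
        rw [← h]; push_cast; ring
      have h2 := (mul_right_cancel₀ (mem_support_iff.mp hν) h').symm
      rw [hzero0 ν hν, zero_add] at h2
      exact h2
    · intro μ hμ hne
      rw [Fco, if_neg]
      rintro ⟨h1', h2', h3'⟩
      have hμ0 := hzero0 μ hμ
      have hν0 := hzero0 ν hν
      exact hne (finsupp3_ext (by omega) (by omega) h3')
    · intro hmem; exact absurd hν hmem
  have huniq : ∀ ν ∈ p.support, ν = ν' := by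
    intro ν hν
    have e1 := heigν ν hν
    have e2 := heigν ν' hν'mem
    have e3 : u ^ (ν 1) * (u⁻¹ ^ 2) ^ (ν 2) = u ^ (ν' 1) * (u⁻¹ ^ 2) ^ (ν' 2) := by
      rw [← e1, ← e2]
    have e4' : u ^ (ν 1) * u ^ (2 * ν' 2) = u ^ (ν' 1) * u ^ (2 * ν 2) := by
      calc u ^ (ν 1) * u ^ (2 * ν' 2)
          = u ^ (ν 1) * ((u⁻¹ ^ 2) ^ (ν 2) * u ^ (2 * ν 2)) * u ^ (2 * ν' 2) := by
            rw [winv hu0 (ν 2)]; ring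
        _ = u ^ (ν' 1) * ((u⁻¹ ^ 2) ^ (ν' 2) * u ^ (2 * ν' 2)) * u ^ (2 * ν 2) := by
            linear_combination (u ^ (2 * ν 2) * u ^ (2 * ν' 2)) * e3
        _ = u ^ (ν' 1) * u ^ (2 * ν 2) := by rw [winv hu0 (ν' 2)]; ring
    have e6 : ν 1 + 2 * ν' 2 = ν' 1 + 2 * ν 2 :=
      upow_inj hu0 hu (by rw [pow_add, pow_add]; exact e4')
    have d1 := hdeg ν hν
    have d2 := hdeg ν' hν'mem
    have hν0 := hzero0 ν hν
    exact finsupp3_ext (by omega) (by omega) (by omega)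
  have hsupp : p.support = {ν'} := Finset.eq_singleton_iff_unique_mem.mpr ⟨hν'mem, huniq⟩
  have hps : p = monomial ν' (coeff ν' p) := by
    conv_lhs => rw [p.as_sum]
    rw [hsupp, Finset.sum_singleton]
  refine ⟨ν' 1, ν' 2, coeff ν' p, hcν', ?_, ?_, ?_⟩
  · have := hdeg ν' hν'mem; omega
  · have hee : ν' = efin 0 (ν' 1) (ν' 2) :=
      finsupp3_ext (by simpa using step2) (by simp) (by simp)
    conv_lhs => rw [hps]
    rw [← hee]
  · rw [step1, step2, zero_add, mul_assoc, winv hu0, mul_one]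

end Stmt7Aux

/-- Let `u ∈ ℂ*` be not a root of unity. Every homogeneous rational
invariant `R = f/g` of the substitution `(x₁,x₂,x₃) ↦ (ux₁ + x₂, ux₂, u⁻²x₃)` is a
constant multiple of an integer power of `x₂²x₃`; in particular `deg f − deg g = 3m`. -/
theorem homogeneous_rational_invariant_is_power_of_x2sq_x3
    (u : ℂ) (hu0 : u ≠ 0) (hu : ∀ n : ℕ, 0 < n → u ^ n ≠ 1)
    (df dg : ℕ) (f g : MvPolynomial (Fin 3) ℂ) (hg : g ≠ 0)
    (hf : f.IsHomogeneous df) (hgh : g.IsHomogeneous dg)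
    (hinv : bind₁ ![C u * X 0 + X 1, C u * X 1, C (u⁻¹ ^ 2) * X 2] f * g
      = f * bind₁ ![C u * X 0 + X 1, C u * X 1, C (u⁻¹ ^ 2) * X 2] g) :
    ∃ (c : ℂ) (m : ℤ),
      (algebraMap (MvPolynomial (Fin 3) ℂ) (FractionRing (MvPolynomial (Fin 3) ℂ)) f) /
        (algebraMap (MvPolynomial (Fin 3) ℂ) (FractionRing (MvPolynomial (Fin 3) ℂ)) g)
      = (algebraMap (MvPolynomial (Fin 3) ℂ) (FractionRing (MvPolynomial (Fin 3) ℂ)) (C c)) *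
        (algebraMap (MvPolynomial (Fin 3) ℂ) (FractionRing (MvPolynomial (Fin 3) ℂ))
          (X 1 ^ 2 * X 2)) ^ m ∧
      (f ≠ 0 → (df : ℤ) - (dg : ℤ) = 3 * m) := by
  classical
  by_cases hf0 : f = 0
  · exact ⟨0, 0, by simp [hf0], fun h => absurd hf0 h⟩
  -- reduce to coprime numerator/denominator
  obtain ⟨f', g', e, hcop, hef, heg⟩ :=
    UniqueFactorizationMonoid.exists_reduced_factors f hf0 g
  have he0 : e ≠ 0 := fun h => hf0 (by rw [← hef, h, zero_mul])
  have hf'0 : f' ≠ 0 := fun h => hf0 (by rw [← hef, h, mul_zero])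
  have hg'0 : g' ≠ 0 := fun h => hg (by rw [← heg, h, mul_zero])
  obtain ⟨de, df1, hdef, hhe, hhf'⟩ := isHomogeneous_of_mul he0 hf'0 (by rw [hef]; exact hf)
  obtain ⟨de2, dg1, hdeg2, hhe2, hhg'⟩ := isHomogeneous_of_mul he0 hg'0 (by rw [heg]; exact hgh)
  have hde : de2 = de := MvPolynomial.IsHomogeneous.inj_right hhe2 hhe he0
  -- the reduced invariance relation
  have hinv0 : bind₁ (vv u) f * g = f * bind₁ (vv u) g := hinv
  have hinv' : bind₁ (vv u) f' * g' = f' * bind₁ (vv u) g' := by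
    rw [← hef, ← heg, map_mul, map_mul] at hinv0
    have hφe : bind₁ (vv u) e ≠ 0 := bind_vv_ne_zero u hu0 he0
    have h' : (bind₁ (vv u) e * e) * (bind₁ (vv u) f' * g')
        = (bind₁ (vv u) e * e) * (f' * bind₁ (vv u) g') := by
      linear_combination hinv0
    exact mul_left_cancel₀ (mul_ne_zero hφe he0) h'
  -- semi-invariance of f' and g'
  have hdvdf : f' ∣ bind₁ (vv u) f' :=
    hcop.dvd_of_dvd_mul_right (by rw [hinv']; exact dvd_mul_right f' _)
  have hdvdg : g' ∣ bind₁ (vv u) g' :=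
    hcop.symm.dvd_of_dvd_mul_left (by rw [← hinv']; exact dvd_mul_left g' _)
  obtain ⟨qf, hqf⟩ := hdvdf
  obtain ⟨qg, hqg⟩ := hdvdg
  have hqf0 : qf ≠ 0 := fun h => by
    rw [h, mul_zero] at hqf
    exact bind_vv_ne_zero u hu0 hf'0 hqf
  have hqg0 : qg ≠ 0 := fun h => by
    rw [h, mul_zero] at hqg
    exact bind_vv_ne_zero u hu0 hg'0 hqg
  have hqfC : qf = C (coeff 0 qf) := by
    obtain ⟨a1, b1, hab, ha1, hb1⟩ := isHomogeneous_of_mul hf'0 hqf0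
      (hqf ▸ bind_vv_isHomogeneous u hhf')
    have : a1 = df1 := MvPolynomial.IsHomogeneous.inj_right ha1 hhf' hf'0
    exact eq_C_of_hom0 qf (by rw [show b1 = 0 by omega] at hb1; exact hb1)
  have hqgC : qg = C (coeff 0 qg) := by
    obtain ⟨a1, b1, hab, ha1, hb1⟩ := isHomogeneous_of_mul hg'0 hqg0
      (hqg ▸ bind_vv_isHomogeneous u hhg')
    have : a1 = dg1 := MvPolynomial.IsHomogeneous.inj_right ha1 hhg' hg'0
    exact eq_C_of_hom0 qg (by rw [show b1 = 0 by omega] at hb1; exact hb1)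
  set lamf := coeff 0 qf with hlamf
  set lamg := coeff 0 qg with hlamg
  have heigf : bind₁ (vv u) f' = C lamf * f' := by rw [hqf, ← hqfC]; ring
  have heigg : bind₁ (vv u) g' = C lamg * g' := by rw [hqg, ← hqgC]; ring
  obtain ⟨j₁, k₁, c₁, hc₁, hjk₁, hpf, hlf⟩ := classify hu0 hu df1 f' hf'0 hhf' lamf heigf
  obtain ⟨j₂, k₂, c₂, hc₂, hjk₂, hpg, hlg⟩ := classify hu0 hu dg1 g' hg'0 hhg' lamg heigg
  have hll : lamf = lamg := by
    have h1 : C lamf * (f' * g') = C lamg * (f' * g') := by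
      have h2 := hinv'
      rw [heigf, heigg] at h2
      linear_combination h2
    exact C_injective _ _ (mul_right_cancel₀ (mul_ne_zero hf'0 hg'0) h1)
  have hexp : j₁ + 2 * k₂ = j₂ + 2 * k₁ := by
    apply upow_inj hu0 hu
    rw [pow_add, pow_add, ← hlf, ← hlg, hll]
    ring
  refine ⟨c₁ / c₂, (k₁ : ℤ) - (k₂ : ℤ), ?_, fun _ => by push_cast; omega⟩
  -- field computation
  set K := FractionRing (MvPolynomial (Fin 3) ℂ)
  set ι := algebraMap (MvPolynomial (Fin 3) ℂ) K with hι
  have hinj : Function.Injective ι := IsFractionRing.injective _ _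
  have hne : ∀ p : MvPolynomial (Fin 3) ℂ, p ≠ 0 → ι p ≠ 0 := fun p hp h =>
    hp (hinj (by rw [h, map_zero]))
  have hx1 : ι (X 1) ≠ 0 := hne _ (X_ne_zero 1)
  have hx2 : ι (X 2) ≠ 0 := hne _ (X_ne_zero 2)
  have hE : ι e ≠ 0 := hne _ he0
  have hB : ι (C c₂) ≠ 0 := hne _ (fun h => hc₂ (by
    have := C_injective (Fin 3) ℂ (h.trans (map_zero C).symm); exact this))
  have hxy : ι (X 1) ^ 2 * ι (X 2) ≠ 0 := mul_ne_zero (pow_ne_zero _ hx1) hx2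
  have hACB : ι (C (c₁ / c₂)) * ι (C c₂) = ι (C c₁) := by
    rw [← map_mul, ← map_mul, div_mul_cancel₀ _ hc₂]
  have hfe : f = e * (C c₁ * X 1 ^ j₁ * X 2 ^ k₁) := by
    rw [← hef, hpf, mono_efin]
    ring
  have hge : g = e * (C c₂ * X 1 ^ j₂ * X 2 ^ k₂) := by
    rw [← heg, hpg, mono_efin]
    ring
  rw [hfe, hge]
  simp only [map_mul, map_pow]
  rw [zpow_sub₀ hxy, zpow_natCast, zpow_natCast, ← mul_div_assoc]
  have hgden : ι e * (ι (C c₂) * ι (X 1) ^ j₂ * ι (X 2) ^ k₂) ≠ 0 :=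
    mul_ne_zero hE (mul_ne_zero (mul_ne_zero hB (pow_ne_zero _ hx1)) (pow_ne_zero _ hx2))
  rw [div_eq_div_iff hgden (pow_ne_zero _ hxy)]
  have hsq : ∀ k : ℕ, (ι (X 1) ^ 2 * ι (X 2)) ^ k = ι (X 1) ^ (2 * k) * ι (X 2) ^ k := by
    intro k
    rw [mul_pow, ← pow_mul]
  rw [hsq, hsq]
  have hxx : ι (X 1) ^ j₁ * ι (X 1) ^ (2 * k₂) = ι (X 1) ^ j₂ * ι (X 1) ^ (2 * k₁) := by
    rw [← pow_add, ← pow_add, hexp]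
  linear_combination (ι e * ι (C (c₁ / c₂)) * ι (C c₂) * ι (X 2) ^ k₁ * ι (X 2) ^ k₂) * hxx
    - (ι e * ι (X 1) ^ j₁ * ι (X 1) ^ (2 * k₂) * ι (X 2) ^ k₁ * ι (X 2) ^ k₂) * hACB
end

section
/- Under the rattleback parameter conditions, the curve Γ is a particular complex solution on the level set H = h, G = 0. Precisely: let h ∈ ℂ, K = m(b₁²+b₂²) + Σ₃₃, α ∈ ℂ with α² = 2h/K, and β = −2mg(ρ₁−ρ₂)/K. Let I ⊆ ℝ be an interval and p : I → ℂ differentiable with p'(t) = (i/2)(p(t)² − α²) and p(t)² ≠ α² for all t. Define ω(t) = (0,0,p(t)), γ(t) = ((p(t)²−α²)/β)·(1, i, 0), r = (−ρ₁, −iρ₂, 0), s(t) = (ρ₁−ρ₂)(p(t)²−α²)/β. Then for all t ∈ I: (i) s² = b₁²γ₁² + b₂²γ₂² + b₃²γ₃² and rⱼ = −bⱼ²γⱼ/s for j = 1,2,3; (ii) γ' = γ×ω; (iii) Θω' + m·r×(ω'×r) = −ω×Θω − m·r×(ω×(ω×r)) + mg·r×γ, and r is constant so the term −m·r×(ω×r')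 vanishes; (iv) H = (m/2)⟨ω×r, ω×r⟩ + (1/2)⟨ω,Θω⟩ − mg⟨r,γ⟩ = h and G = ⟨γ,γ⟩ = 0. -/
open Matrix

/-- The curve `Γ` is a particular complex solution of the rattleback
equations on the level set `H = h`, `G = 0`: with `p' = (i/2)(p² − α²)`,
`ω = (0,0,p)`, `γ = ((p²−α²)/β)(1,i,0)`, `r = (−ρ₁,−iρ₂,0)`, `s = (ρ₁−ρ₂)(p²−α²)/β`,
one has (i) the contact-point relations, (ii) `γ' = γ×ω`, (iii) the equations of motion
with `r` constant, and (iv) `H = h`, `G = 0`. -/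
theorem rattleback_particular_solution
    (S11 S12 S22 S33 b1 b2 b3 m g ρ1 ρ2 ρ3 : ℝ)
    (hS11 : 0 < S11) (hS12 : 0 < S12) (hS22 : 0 < S22) (hS33 : 0 < S33)
    (hS : S33 < S11 + S22)
    (hρ12 : ρ2 < ρ1) (hρ2 : 0 < ρ2) (hρ3 : 0 < ρ3) (hm : 0 < m) (hg : 0 < g)
    (hb1 : b1 ^ 2 = ρ1 * (ρ1 - ρ2)) (hb2 : b2 ^ 2 = ρ2 * (ρ1 - ρ2))
    (hb3 : b3 ^ 2 = ρ3 * (ρ1 - ρ2))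
    (Θ : Matrix (Fin 3) (Fin 3) ℂ)
    (hΘ : Θ = !![(S11 : ℂ), (S12 : ℂ), 0; (S12 : ℂ), (S22 : ℂ), 0; 0, 0, (S33 : ℂ)])
    (h : ℂ) (K : ℝ) (hK : K = m * (b1 ^ 2 + b2 ^ 2) + S33)
    (α : ℂ) (hα : α ^ 2 = 2 * h / (K : ℂ))
    (β : ℝ) (hβ : β = -(2 * m * g * (ρ1 - ρ2)) / K)
    (I' : Set ℝ) (p : ℝ → ℂ)
    (hp : ∀ t ∈ I', HasDerivAt p (Complex.I / 2 * (p t ^ 2 - α ^ 2)) t)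
    (hpα : ∀ t ∈ I', p t ^ 2 ≠ α ^ 2)
    (ω γ : ℝ → (Fin 3 → ℂ)) (s : ℝ → ℂ) (r : Fin 3 → ℂ)
    (hω : ∀ t, ω t = ![0, 0, p t])
    (hγ : ∀ t, γ t = ((p t ^ 2 - α ^ 2) / (β : ℂ)) • ![1, Complex.I, 0])
    (hr : r = ![-(ρ1 : ℂ), -(Complex.I * (ρ2 : ℂ)), 0])
    (hs : ∀ t, s t = ((ρ1 : ℂ) - ρ2) * (p t ^ 2 - α ^ 2) / (β : ℂ))
    (ωdot : ℝ → (Fin 3 → ℂ))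
    (hωdot : ∀ t, ωdot t = ![0, 0, Complex.I / 2 * (p t ^ 2 - α ^ 2)]) :
    ∀ t ∈ I',
      (s t ^ 2 = (b1 : ℂ) ^ 2 * (γ t 0) ^ 2 + (b2 : ℂ) ^ 2 * (γ t 1) ^ 2
          + (b3 : ℂ) ^ 2 * (γ t 2) ^ 2 ∧
        ∀ j : Fin 3, r j = -(![(b1 : ℂ) ^ 2, (b2 : ℂ) ^ 2, (b3 : ℂ) ^ 2] j * γ t j) / s t) ∧
      HasDerivAt γ (crossProduct (γ t) (ω t)) t ∧
      (Θ.mulVec (ωdot t) + (m : ℂ) • crossProduct r (crossProduct (ωdot t) r)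
        = -(crossProduct (ω t) (Θ.mulVec (ω t)))
          - (m : ℂ) • crossProduct r (crossProduct (ω t) (crossProduct (ω t) r))
          + ((m * g : ℝ) : ℂ) • crossProduct r (γ t)
          - (m : ℂ) • crossProduct r (crossProduct (ω t) (0 : Fin 3 → ℂ)) ∧
       (m : ℂ) • crossProduct r (crossProduct (ω t) (0 : Fin 3 → ℂ)) = 0) ∧
      ((m : ℂ) / 2 * (crossProduct (ω t) r ⬝ᵥ crossProduct (ω t) r)
          + 1 / 2 * (ω t ⬝ᵥ Θ.mulVec (ω t)) - (m : ℂ) * g * (r ⬝ᵥ γ t) = h ∧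
        γ t ⬝ᵥ γ t = 0) := by

  subst hΘ hr hK hβ
  intro t ht
  have hq : p t ^ 2 - α ^ 2 ≠ 0 := sub_ne_zero.mpr (hpα t ht)
  have hρR : (0:ℝ) < ρ1 - ρ2 := by linarith
  have hKpos : (0:ℝ) < m * (b1 ^ 2 + b2 ^ 2) + S33 := by positivity
  have hK0 : ((m * (b1 ^ 2 + b2 ^ 2) + S33 : ℝ) : ℂ) ≠ 0 := by exact_mod_cast hKpos.ne'
  have hβR : (-(2 * m * g * (ρ1 - ρ2)) / (m * (b1 ^ 2 + b2 ^ 2) + S33) : ℝ) ≠ 0 := by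
    apply div_ne_zero _ hKpos.ne'
    have : (0:ℝ) < 2 * m * g * (ρ1 - ρ2) := by positivity
    linarith
  have hβ0 : ((-(2 * m * g * (ρ1 - ρ2)) / (m * (b1 ^ 2 + b2 ^ 2) + S33) : ℝ) : ℂ) ≠ 0 := by
    exact_mod_cast hβR
  set βC : ℂ := ((-(2 * m * g * (ρ1 - ρ2)) / (m * (b1 ^ 2 + b2 ^ 2) + S33) : ℝ) : ℂ) with hβC
  have hβval : βC * ((m * (b1 ^ 2 + b2 ^ 2) + S33 : ℝ) : ℂ) = -(2 * m * g * ((ρ1:ℂ) - ρ2)) := by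
    rw [hβC]
    push_cast
    rw [div_mul_cancel₀]
    push_cast at hK0
    exact hK0
  have hb1C : (b1:ℂ) ^ 2 = (ρ1:ℂ) * ((ρ1:ℂ) - ρ2) := by exact_mod_cast congrArg (Complex.ofReal) hb1
  have hb2C : (b2:ℂ) ^ 2 = (ρ2:ℂ) * ((ρ1:ℂ) - ρ2) := by exact_mod_cast congrArg (Complex.ofReal) hb2
  have hb3C : (b3:ℂ) ^ 2 = (ρ3:ℂ) * ((ρ1:ℂ) - ρ2) := by exact_mod_cast congrArg (Complex.ofReal) hb3
  have hρC : ((ρ1:ℂ) - ρ2) ≠ 0 := by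
    have : ((ρ1 - ρ2 : ℝ) : ℂ) ≠ 0 := by exact_mod_cast hρR.ne'
    push_cast at this; exact this
  refine ⟨⟨?_, ?_⟩, ?_, ⟨?_, ?_⟩, ?_, ?_⟩
  · -- s^2 relation
    rw [hs, hγ]
    simp only [Pi.smul_apply, Matrix.cons_val_zero, Matrix.cons_val_one, Matrix.head_cons,
      Matrix.cons_val_two, Matrix.tail_cons, smul_eq_mul]
    rw [hb1C, hb2C, hb3C]
    field_simp
    ring_nf
    simp only [Complex.I_sq]
    ring
  · intro j
    fin_cases j
    · simp only [hs, hγ, Pi.smul_apply, Matrix.cons_val_zero, smul_eq_mul, Fin.isValue,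
        Matrix.cons_val', Matrix.empty_val', Matrix.cons_val_fin_one, Fin.zero_eta]
      rw [hb1C]
      field_simp
    · simp only [hs, hγ, Pi.smul_apply, Matrix.cons_val_one, Matrix.head_cons, smul_eq_mul,
        Fin.isValue, Matrix.cons_val', Matrix.empty_val', Matrix.cons_val_fin_one, Fin.mk_one, Matrix.cons_val_zero]
      rw [hb2C]
      field_simp
    · simp only [hs, hγ, Pi.smul_apply, Matrix.cons_val_two, Matrix.tail_cons, smul_eq_mul,
        Fin.isValue, Matrix.cons_val', Matrix.empty_val', Matrix.cons_val_fin_one]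
      simp
  · -- derivative
    have hfun : γ = fun u => ((p u ^ 2 - α ^ 2) / βC) • ![1, Complex.I, 0] := funext hγ
    rw [hfun]
    have hsq : HasDerivAt (fun u => p u ^ 2)
        (Complex.I / 2 * (p t ^ 2 - α ^ 2) * p t + p t * (Complex.I / 2 * (p t ^ 2 - α ^ 2))) t := by
      have hmul := (hp t ht).mul (hp t ht); simp only [pow_two] at hmul ⊢; exact hmul
    have hds := ((hsq.sub_const (α ^ 2)).div_const βC).smul_const
      (![1, Complex.I, 0] : Fin 3 → ℂ)
    refine hds.congr_deriv (Eq.symm ?_)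
    rw [hω]
    funext i
    fin_cases i
    · simp [cross_apply, Pi.smul_apply, smul_eq_mul]
      ring
    · simp [cross_apply, Pi.smul_apply, smul_eq_mul]
      linear_combination (p t * α ^ 2 * βC⁻¹ - p t ^ 3 * βC⁻¹) * Complex.I_sq
    · simp [cross_apply, Pi.smul_apply, smul_eq_mul]
  · -- equations of motion
    rw [hωdot, hω, hγ]
    funext i
    fin_cases i
    · simp [cross_apply, Matrix.mulVec, dotProduct, Fin.sum_univ_three]
    · simp [cross_apply, Matrix.mulVec, dotProduct, Fin.sum_univ_three]
    · simp [cross_apply, Matrix.mulVec, dotProduct, Fin.sum_univ_three]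
      push_cast at hβval hK0
      rw [hb1C, hb2C] at hβval hK0
      field_simp
      linear_combination (p t ^ 2 - α ^ 2) * hβval
        + ((p t ^ 2 - α ^ 2) * (m : ℂ) * (ρ2 : ℂ) ^ 2 * βC) * Complex.I_sq
  · rw [hω]
    funext i
    fin_cases i <;> simp [cross_apply]
  · -- H = h
    rw [hω, hγ]
    simp only [cross_apply, dotProduct, Fin.sum_univ_three, Matrix.mulVec,
      Matrix.cons_val_zero, Matrix.cons_val_one, Matrix.head_cons, Matrix.cons_val_two,
      Matrix.tail_cons, Pi.smul_apply, smul_eq_mul, Matrix.cons_val', Matrix.empty_val',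
      Matrix.cons_val_fin_one, Matrix.of_apply, Matrix.head_fin_const]
    have hαK : α ^ 2 * ((m * (b1 ^ 2 + b2 ^ 2) + S33 : ℝ) : ℂ) = 2 * h := by
      rw [hα, div_mul_cancel₀ _ hK0]
    push_cast at hβval hαK hK0
    rw [hb1C, hb2C] at hβval hαK hK0
    field_simp
    linear_combination (p t ^ 2 - α ^ 2) * hβval + βC * hαK
      + ((m : ℂ) * p t ^ 2 * (ρ2 : ℂ) ^ 2 * βC
          + 2 * (m : ℂ) * (g : ℂ) * (ρ2 : ℂ) * (p t ^ 2 - α ^ 2)) * Complex.I_sq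
  · rw [hγ]
    simp only [dotProduct, Fin.sum_univ_three, Pi.smul_apply, Matrix.cons_val_zero,
      Matrix.cons_val_one, Matrix.head_cons, Matrix.cons_val_two, Matrix.tail_cons, smul_eq_mul]
    linear_combination ((p t ^ 2 - α ^ 2) / βC) ^ 2 * Complex.I_sq
end

section
/- Under the rattleback parameter conditions, the partial derivatives of the energy H with respect to ω₁, ω₂ and γ₃, and of the geometric integral G with respect to γ₃, all vanish at every point of the curve Γ. Precisely, let h ∈ ℂ, K = m(b₁²+b₂²)+Σ₃₃, α² = 2h/K, β = −2mg(ρ₁−ρ₂)/K, fix p ∈ ℂ with p² ≠ α², and let (ω⁰,γ⁰) = ((0,0,p), ((p²−α²)/β)(1,i,0)) be the corresponding point of Γ. Let s(γ) be an analytic function on a neighborhood of γ⁰ with s(γ)² = b₁²γ₁² + b₂²γ₂² + b₃²γ₃² and s(γ⁰) = (ρ₁−ρ₂)(p²−α²)/β, and set R(γ) = −(b₁²γ₁, b₂²γ₂, b₃²γ₃)/s(γ), H(ω,γ) = (m/2)⟨ω×R(γ), ω×R(γ)⟩ + (1/2)⟨ω,Θω⟩ − mg⟨R(γ),γ⟩,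 G(γ) = ⟨γ,γ⟩. Then ∂H/∂ω₁, ∂H/∂ω₂, ∂H/∂γ₃ and ∂G/∂γ₃ all vanish at (ω⁰,γ⁰). -/
/-!
Let `σ = diag(1, 1, -1)` and `τ(ω, γ) = (-σ ω, σ γ)`; here `-σ` is the half-turn about the
vertical axis. Since `ω⁰` is vertical and `γ⁰` horizontal, `τ` fixes `(ω⁰, γ⁰)`, and the
directions `ω₁`, `ω₂`, `γ₃` are `(-1)`-eigenvectors of `τ`. Near `γ⁰` the branch `s` is
`σ`-invariant: `s ∘ σ` and `s` have the same square and agree at `γ⁰`, where they do not vanish.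
Hence `R ∘ σ = σ ∘ R`, and as the half-turn preserves cross products, `σ` preserves `⟨·,·⟩` and
commutes with the block-diagonal `Θ`, `H ∘ τ = H` near `(ω⁰, γ⁰)`; likewise `G ∘ σ = G`.
The differential of an invariant function at a fixed point vanishes on the `(-1)`-eigenspace.
-/

open Matrix Filter Topology

theorem fderiv_apply_eq_zero_of_invariant {𝕜 E F : Type*} [NontriviallyNormedField 𝕜]
    [CharZero 𝕜] [NormedAddCommGroup E] [NormedSpace 𝕜 E] [NormedAddCommGroup F]
    [NormedSpace 𝕜 F] {f : E → F} {x v : E} (T : E →L[𝕜] E) (hTx : T x = x)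
    (hf : f ∘ T =ᶠ[𝓝 x] f) (hTv : T v = -v) : fderiv 𝕜 f x v = 0 := by
  by_cases hdiff : DifferentiableAt 𝕜 f x
  · have hfT : HasFDerivAt f (fderiv 𝕜 f x) (T x) := by rw [hTx]; exact hdiff.hasFDerivAt
    have hD : (fderiv 𝕜 f x).comp T = fderiv 𝕜 f x :=
      (hfT.comp x T.hasFDerivAt).unique (hdiff.hasFDerivAt.congr_of_eventuallyEq hf)
    have hneg : fderiv 𝕜 f x v = -fderiv 𝕜 f x v := by
      rw [← map_neg, ← hTv, ← ContinuousLinearMap.comp_apply, hD]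
    have htwo : (2 : 𝕜) • fderiv 𝕜 f x v = 0 := by
      rw [two_smul]; nth_rewrite 2 [hneg]; exact add_neg_cancel _
    exact (smul_eq_zero.mp htwo).resolve_left two_ne_zero
  · simp [fderiv_zero_of_not_differentiableAt hdiff]

theorem eventuallyEq_of_sq_eventuallyEq {X 𝕜 : Type*} [TopologicalSpace X] [NormedField 𝕜]
    [CharZero 𝕜] {f g : X → 𝕜} {x : X} (hf : ContinuousAt f x) (hg : ContinuousAt g x)
    (hfg : f x = g x) (hx : f x ≠ 0) (hsq : ∀ᶠ y in 𝓝 x, f y ^ 2 = g y ^ 2) : f =ᶠ[𝓝 x] g := by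
  have hsum : ∀ᶠ y in 𝓝 x, f y + g y ≠ 0 :=
    (hf.add hg).eventually_ne (by simpa [← hfg, ← two_mul] using hx)
  filter_upwards [hsum, hsq] with y hy hy2
  have : (f y - g y) * (f y + g y) = 0 := by linear_combination hy2
  exact sub_eq_zero.mp ((mul_eq_zero.mp this).resolve_right hy)

theorem eventuallyEq_comp_of_sq_eventuallyEq {X 𝕜 : Type*} [TopologicalSpace X]
    [NormedField 𝕜] [CharZero 𝕜] {f q : X → 𝕜} {T : X → X} {x : X} (hT : ContinuousAt T x)
    (hTx : T x = x) (hf : ContinuousAt f x) (hx : f x ≠ 0) (hsq : ∀ᶠ y in 𝓝 x, f y ^ 2 = q y)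
    (hq : ∀ y, q (T y) = q y) : f ∘ T =ᶠ[𝓝 x] f := by
  have hT' : Tendsto T (𝓝 x) (𝓝 x) := by simpa only [hTx] using hT.tendsto
  refine eventuallyEq_of_sq_eventuallyEq (hf.comp_of_eq hT hTx) hf
    (by rw [Function.comp_apply, hTx]) (by rwa [Function.comp_apply, hTx]) ?_
  filter_upwards [hT'.eventually hsq, hsq] with y hTy hy
  rw [Function.comp_apply, hTy, hy, hq]

section zReflection

variable {R : Type*} [CommRing R]

def zReflection : Matrix (Fin 3) (Fin 3) R := diagonal ![1, 1, -1]

theorem zReflection_mulVec (v : Fin 3 → R) : zReflection *ᵥ v = ![v 0, v 1, -v 2] := by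
  ext i; fin_cases i <;> simp [zReflection, mulVec_diagonal]

theorem neg_zReflection_mulVec_cross (v w : Fin 3 → R) :
    -(zReflection *ᵥ v) ⨯₃ (zReflection *ᵥ w) = zReflection *ᵥ (v ⨯₃ w) := by
  ext i; fin_cases i <;> simp [zReflection_mulVec, cross_apply]; ring

theorem zReflection_mulVec_dotProduct (v w : Fin 3 → R) :
    (zReflection *ᵥ v) ⬝ᵥ (zReflection *ᵥ w) = v ⬝ᵥ w := by
  simp [zReflection_mulVec, dotProduct, Fin.sum_univ_three]

theorem zReflection_mulVec_dotProduct_blockDiagonal_mulVec (a b c d e : R) (v w : Fin 3 → R) :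
    (zReflection *ᵥ v) ⬝ᵥ (!![a, b, 0; c, d, 0; 0, 0, e] *ᵥ (zReflection *ᵥ w))
      = v ⬝ᵥ (!![a, b, 0; c, d, 0; 0, 0, e] *ᵥ w) := by
  simp only [zReflection_mulVec]
  simp [dotProduct, mulVec, Fin.sum_univ_three]

theorem diagonal_div_zReflection_mulVec {K : Type*} [Field K] (d : Fin 3 → K) (t : K)
    (v : Fin 3 → K) :
    (fun j => -(d j * (zReflection *ᵥ v) j) / t) = zReflection *ᵥ fun j => -(d j * v j) / t := by
  ext i; fin_cases i <;> simp [zReflection_mulVec, neg_div]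

theorem energy_zReflection {K : Type*} [Field K] (m g a b c d e : K) (ω r γ : Fin 3 → K) :
    m / 2 * (-(zReflection *ᵥ ω) ⨯₃ (zReflection *ᵥ r) ⬝ᵥ -(zReflection *ᵥ ω) ⨯₃ (zReflection *ᵥ r))
        + 1 / 2 * (-(zReflection *ᵥ ω) ⬝ᵥ !![a, b, 0; c, d, 0; 0, 0, e] *ᵥ -(zReflection *ᵥ ω))
        - m * g * ((zReflection *ᵥ r) ⬝ᵥ (zReflection *ᵥ γ))
      = m / 2 * (ω ⨯₃ r ⬝ᵥ ω ⨯₃ r) + 1 / 2 * (ω ⬝ᵥ !![a, b, 0; c, d, 0; 0, 0, e] *ᵥ ω)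
        - m * g * (r ⬝ᵥ γ) := by
  rw [neg_zReflection_mulVec_cross, zReflection_mulVec_dotProduct, mulVec_neg, neg_dotProduct,
    dotProduct_neg, neg_neg, zReflection_mulVec_dotProduct_blockDiagonal_mulVec,
    zReflection_mulVec_dotProduct]

end zReflection

theorem rattleback_beta_ne_zero {S33 b1 b2 m g ρ1 ρ2 : ℝ} (hS33 : 0 < S33) (hρ12 : ρ2 < ρ1)
    (hm : 0 < m) (hg : 0 < g) : -(2 * m * g * (ρ1 - ρ2)) / (m * (b1 ^ 2 + b2 ^ 2) + S33) ≠ 0 :=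
  div_ne_zero (neg_ne_zero.mpr (mul_pos (by positivity) (sub_pos.mpr hρ12)).ne') (by positivity)

theorem rattleback_first_integrals_normal_derivatives_vanish_general
    (S11 S12 S22 S33 b1 b2 b3 m g ρ1 ρ2 : ℝ)
    (hS33 : 0 < S33)
    (hρ12 : ρ2 < ρ1) (hm : 0 < m) (hg : 0 < g)
    (Θ : Matrix (Fin 3) (Fin 3) ℂ)
    (hΘ : Θ = !![(S11 : ℂ), (S12 : ℂ), 0; (S12 : ℂ), (S22 : ℂ), 0; 0, 0, (S33 : ℂ)])
    (K : ℝ) (hK : K = m * (b1 ^ 2 + b2 ^ 2) + S33)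
    (α : ℂ)
    (β : ℝ) (hβ : β = -(2 * m * g * (ρ1 - ρ2)) / K)
    (p : ℂ) (hp : p ^ 2 ≠ α ^ 2)
    (ω0 γ0 : Fin 3 → ℂ)
    (hω0 : ω0 = ![0, 0, p])
    (hγ0 : γ0 = ((p ^ 2 - α ^ 2) / (β : ℂ)) • ![1, Complex.I, 0])
    (s : (Fin 3 → ℂ) → ℂ)
    (hs_an : AnalyticAt ℂ s γ0)
    (hs_sq : ∀ᶠ γ in nhds γ0, s γ ^ 2
      = (b1 : ℂ) ^ 2 * (γ 0) ^ 2 + (b2 : ℂ) ^ 2 * (γ 1) ^ 2 + (b3 : ℂ) ^ 2 * (γ 2) ^ 2)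
    (hs0 : s γ0 = ((ρ1 : ℂ) - ρ2) * (p ^ 2 - α ^ 2) / (β : ℂ))
    (R : (Fin 3 → ℂ) → (Fin 3 → ℂ))
    (hR : ∀ γ, R γ = fun j => -(![(b1 : ℂ) ^ 2, (b2 : ℂ) ^ 2, (b3 : ℂ) ^ 2] j * γ j) / s γ)
    (H : (Fin 3 → ℂ) × (Fin 3 → ℂ) → ℂ)
    (hH : ∀ x : (Fin 3 → ℂ) × (Fin 3 → ℂ), H x
      = (m : ℂ) / 2 * (crossProduct x.1 (R x.2) ⬝ᵥ crossProduct x.1 (R x.2))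
        + 1 / 2 * (x.1 ⬝ᵥ Θ.mulVec x.1) - (m : ℂ) * g * (R x.2 ⬝ᵥ x.2))
    (G : (Fin 3 → ℂ) → ℂ) (hG : ∀ γ, G γ = γ ⬝ᵥ γ) :
    fderiv ℂ H (ω0, γ0) (Pi.single 0 1, 0) = 0 ∧
    fderiv ℂ H (ω0, γ0) (Pi.single 1 1, 0) = 0 ∧
    fderiv ℂ H (ω0, γ0) (0, Pi.single 2 1) = 0 ∧
    fderiv ℂ G γ0 (Pi.single 2 1) = 0 := by
  subst hΘ
  let σ : (Fin 3 → ℂ) →L[ℂ] (Fin 3 → ℂ) := LinearMap.toContinuousLinearMap zReflection.mulVecLin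
  have hσ (v : Fin 3 → ℂ) : σ v = zReflection *ᵥ v := rfl
  have hσγ0 : σ γ0 = γ0 := by rw [hσ, zReflection_mulVec, hγ0]; ext i; fin_cases i <;> simp
  have hσω0 : -σ ω0 = ω0 := by rw [hσ, zReflection_mulVec, hω0]; ext i; fin_cases i <;> simp
  have hs0_ne : s γ0 ≠ 0 := by
    have hβ0 : β ≠ 0 := hβ ▸ hK ▸ rattleback_beta_ne_zero hS33 hρ12 hm hg
    rw [hs0]
    exact div_ne_zero (mul_ne_zero (by exact_mod_cast (sub_pos.mpr hρ12).ne') (sub_ne_zero.mpr hp))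
      (by exact_mod_cast hβ0)
  have hs_refl : s ∘ σ =ᶠ[𝓝 γ0] s :=
    eventuallyEq_comp_of_sq_eventuallyEq σ.continuous.continuousAt hσγ0 hs_an.continuousAt
      hs0_ne hs_sq fun γ => by simp [hσ, zReflection_mulVec]
  have hH_refl : H ∘ (-σ).prodMap σ =ᶠ[𝓝 (ω0, γ0)] H := by
    filter_upwards [continuous_snd.continuousAt.eventually hs_refl] with x hx
    simp only [Function.comp_apply, ContinuousLinearMap.coe_prodMap', Prod.map, hσ] at hx ⊢
    rw [hH, hH, hR, hR, hx, diagonal_div_zReflection_mulVec]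
    exact energy_zReflection ..
  have hG_refl : G ∘ σ =ᶠ[𝓝 γ0] G := .of_eq <| funext fun γ => by
    rw [Function.comp_apply, hG, hG, hσ, zReflection_mulVec_dotProduct]
  have hH_zero (v : (Fin 3 → ℂ) × (Fin 3 → ℂ)) (hv : (-σ).prodMap σ v = -v) :
      fderiv ℂ H (ω0, γ0) v = 0 :=
    fderiv_apply_eq_zero_of_invariant _ (Prod.ext hσω0 hσγ0) hH_refl hv
  refine ⟨hH_zero _ ?_, hH_zero _ ?_, hH_zero _ ?_,
    fderiv_apply_eq_zero_of_invariant σ hσγ0 hG_refl ?_⟩ <;>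
  ext i <;> fin_cases i <;> simp [hσ, zReflection]

/-- At every point of the curve `Γ`, the partial derivatives of the energy
`H` with respect to `ω₁`, `ω₂` and `γ₃`, and of the geometric integral `G` with respect to
`γ₃`, all vanish. -/
theorem rattleback_first_integrals_normal_derivatives_vanish
    (S11 S12 S22 S33 b1 b2 b3 m g ρ1 ρ2 ρ3 : ℝ)
    (hS11 : 0 < S11) (hS12 : 0 < S12) (hS22 : 0 < S22) (hS33 : 0 < S33)
    (hS : S33 < S11 + S22)
    (hρ12 : ρ2 < ρ1) (hρ2 : 0 < ρ2) (hρ3 : 0 < ρ3) (hm : 0 < m) (hg : 0 < g)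
    (hb1 : b1 ^ 2 = ρ1 * (ρ1 - ρ2)) (hb2 : b2 ^ 2 = ρ2 * (ρ1 - ρ2))
    (hb3 : b3 ^ 2 = ρ3 * (ρ1 - ρ2))
    (Θ : Matrix (Fin 3) (Fin 3) ℂ)
    (hΘ : Θ = !![(S11 : ℂ), (S12 : ℂ), 0; (S12 : ℂ), (S22 : ℂ), 0; 0, 0, (S33 : ℂ)])
    (h : ℂ) (K : ℝ) (hK : K = m * (b1 ^ 2 + b2 ^ 2) + S33)
    (α : ℂ) (hα : α ^ 2 = 2 * h / (K : ℂ))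
    (β : ℝ) (hβ : β = -(2 * m * g * (ρ1 - ρ2)) / K)
    (p : ℂ) (hp : p ^ 2 ≠ α ^ 2)
    (ω0 γ0 : Fin 3 → ℂ)
    (hω0 : ω0 = ![0, 0, p])
    (hγ0 : γ0 = ((p ^ 2 - α ^ 2) / (β : ℂ)) • ![1, Complex.I, 0])
    (s : (Fin 3 → ℂ) → ℂ)
    (hs_an : AnalyticAt ℂ s γ0)
    (hs_sq : ∀ᶠ γ in nhds γ0, s γ ^ 2
      = (b1 : ℂ) ^ 2 * (γ 0) ^ 2 + (b2 : ℂ) ^ 2 * (γ 1) ^ 2 + (b3 : ℂ) ^ 2 * (γ 2) ^ 2)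
    (hs0 : s γ0 = ((ρ1 : ℂ) - ρ2) * (p ^ 2 - α ^ 2) / (β : ℂ))
    (R : (Fin 3 → ℂ) → (Fin 3 → ℂ))
    (hR : ∀ γ, R γ = fun j => -(![(b1 : ℂ) ^ 2, (b2 : ℂ) ^ 2, (b3 : ℂ) ^ 2] j * γ j) / s γ)
    (H : (Fin 3 → ℂ) × (Fin 3 → ℂ) → ℂ)
    (hH : ∀ x : (Fin 3 → ℂ) × (Fin 3 → ℂ), H x
      = (m : ℂ) / 2 * (crossProduct x.1 (R x.2) ⬝ᵥ crossProduct x.1 (R x.2))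
        + 1 / 2 * (x.1 ⬝ᵥ Θ.mulVec x.1) - (m : ℂ) * g * (R x.2 ⬝ᵥ x.2))
    (G : (Fin 3 → ℂ) → ℂ) (hG : ∀ γ, G γ = γ ⬝ᵥ γ) :
    fderiv ℂ H (ω0, γ0) (Pi.single 0 1, 0) = 0 ∧
    fderiv ℂ H (ω0, γ0) (Pi.single 1 1, 0) = 0 ∧
    fderiv ℂ H (ω0, γ0) (0, Pi.single 2 1) = 0 ∧
    fderiv ℂ G γ0 (Pi.single 2 1) = 0 :=
  rattleback_first_integrals_normal_derivatives_vanish_general S11 S12 S22 S33 b1 b2 b3 m g ρ1 ρ2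
    hS33 hρ12 hm hg Θ hΘ K hK α β hβ p hp ω0 γ0 hω0 hγ0 s hs_an hs_sq hs0 R hR H hH G hG
end

section
/- In the rigid body limiting case, the residue matrix A = [[0, i(Σ₃₃−Σ₂₂)/Σ₁₁, 0], [i(Σ₁₁−Σ₃₃)/Σ₂₂, 0, 0], [−1/β, −i/β, −1]] has characteristic polynomial (x+1)·(x² − (Σ₁₁−Σ₃₃)(Σ₂₂−Σ₃₃)/(Σ₁₁Σ₂₂)); hence its spectrum is { −1, −√((Σ₁₁−Σ₃₃)(Σ₂₂−Σ₃₃)/(Σ₁₁Σ₂₂)), +√((Σ₁₁−Σ₃₃)(Σ₂₂−Σ₃₃)/(Σ₁₁Σ₂₂)) }. In particular, in the Kovalevskaya case Σ₂₂ = Σ₁₁, Σ₃₃ = 2Σ₁₁ the eigenvalues are {−1, 1, 1}. -/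
open Matrix

/-- In the rigid body limiting case the residue matrix `A` has
characteristic polynomial `(x+1)(x² − (Σ₁₁−Σ₃₃)(Σ₂₂−Σ₃₃)/(Σ₁₁Σ₂₂))`, hence spectrum
`{−1, −μ, μ}` where `μ² = (Σ₁₁−Σ₃₃)(Σ₂₂−Σ₃₃)/(Σ₁₁Σ₂₂)`; in the Kovalevskaya case
`Σ₂₂ = Σ₁₁`, `Σ₃₃ = 2Σ₁₁` the eigenvalues are `{−1, 1, 1}`. -/
theorem rigid_body_residue_matrix_spectrum
    (S11 S22 S33 : ℝ) (h11 : 0 < S11) (h22 : 0 < S22)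
    (β : ℂ) (hβ : β ≠ 0)
    (A : Matrix (Fin 3) (Fin 3) ℂ)
    (hA : A = !![0, Complex.I * ((S33 : ℂ) - S22) / S11, 0;
                 Complex.I * ((S11 : ℂ) - S33) / S22, 0, 0;
                 -(1 / β), -(Complex.I / β), -1]) :
    (∀ x : ℂ, (x • (1 : Matrix (Fin 3) (Fin 3) ℂ) - A).det
      = (x + 1) * (x ^ 2 - (((S11 - S33) * (S22 - S33) / (S11 * S22) : ℝ) : ℂ))) ∧
    (∀ μ : ℂ, μ ^ 2 = (((S11 - S33) * (S22 - S33) / (S11 * S22) : ℝ) : ℂ) →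
      spectrum ℂ A = {-1, -μ, μ}) ∧
    (S22 = S11 → S33 = 2 * S11 → spectrum ℂ A = {-1, 1, 1}) := by
  have h11' : (S11 : ℂ) ≠ 0 := by exact_mod_cast h11.ne'
  have h22' : (S22 : ℂ) ≠ 0 := by exact_mod_cast h22.ne'
  have hdet : ∀ x : ℂ, (x • (1 : Matrix (Fin 3) (Fin 3) ℂ) - A).det
      = (x + 1) * (x ^ 2 - (((S11 - S33) * (S22 - S33) / (S11 * S22) : ℝ) : ℂ)) := by
    intro x
    subst hA
    simp only [Matrix.det_fin_three, Matrix.sub_apply, Matrix.smul_apply, Matrix.one_apply,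
      Matrix.cons_val', Matrix.cons_val_zero, Matrix.cons_val_one, Matrix.head_cons,
      Matrix.empty_val', Matrix.cons_val_fin_one, Matrix.head_fin_const,
      Matrix.cons_val_two, Matrix.tail_cons]
    push_cast
    norm_num
    field_simp
    ring_nf
    simp [Complex.I_sq]
    ring
  have hspec : ∀ μ : ℂ, μ ^ 2 = (((S11 - S33) * (S22 - S33) / (S11 * S22) : ℝ) : ℂ) →
      spectrum ℂ A = {-1, -μ, μ} := by
    intro μ hμ
    ext x
    have hmem : x ∈ spectrum ℂ A ↔ ¬ IsUnit (x • (1 : Matrix (Fin 3) (Fin 3) ℂ) - A) := by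
      rw [spectrum.mem_iff, Algebra.algebraMap_eq_smul_one]
    rw [hmem, Matrix.isUnit_iff_isUnit_det, isUnit_iff_ne_zero, not_not, hdet x, ← hμ]
    have hfac : (x + 1) * (x ^ 2 - μ ^ 2) = (x + 1) * ((x + μ) * (x - μ)) := by ring
    rw [hfac, mul_eq_zero, mul_eq_zero]
    simp only [Set.mem_insert_iff, Set.mem_singleton_iff]
    constructor
    · rintro (h | h | h)
      · exact Or.inl (by linear_combination h)
      · exact Or.inr (Or.inl (by linear_combination h))
      · exact Or.inr (Or.inr (by linear_combination h))
    · rintro (h | h | h)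
      · exact Or.inl (by linear_combination h)
      · exact Or.inr (Or.inl (by linear_combination h))
      · exact Or.inr (Or.inr (by linear_combination h))
  refine ⟨hdet, hspec, ?_⟩
  intro h1 h2
  have hc : (((S11 - S33) * (S22 - S33) / (S11 * S22) : ℝ) : ℂ) = 1 := by
    have : ((S11 - S33) * (S22 - S33) / (S11 * S22) : ℝ) = 1 := by
      subst h1 h2; field_simp; ring
    rw [this]; norm_num
  have h := hspec 1 (by rw [hc]; norm_num)
  rw [h]
  ext x
  simp only [Set.mem_insert_iff, Set.mem_singleton_iff]
  constructor
  · rintro (h | h | h) <;> simp [h]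
  · rintro (h | h | h) <;> simp [h]
end
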